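/- arXiv:2307.10910 — 9 statements merged into one kernel-verified Lean document; each statement's English description precedes it below -/
import Mathlib

section
/- The path graph of length M (on M+1 vertices) is circularly k-partite for each k in {1,…,2M}. -/
open SimpleGraph Function

/-- A circular `k`-colouring of the oriented edges of `G`: every colour class is nonempty
(on adjacent pairs), and the colour increases by one along every non-backtracking step. -/
def IsCircularColoring {V : Type*} (G : SimpleGraph V) (k : ℕ) (c : V → V → ZMod k) : Prop :=
  (∀ j : ZMod k, ∃ v w, G.Adj v w ∧ c v w = j) ∧
  ∀ v w z, G.Adj v w → G.Adj w z → z ≠ v → c w z = c v w + 1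

/-- `G` is circularly `k`-partite. -/
def CircularlyPartite {V : Type*} (G : SimpleGraph V) (k : ℕ) : Prop :=
  0 < k ∧ ∃ c : V → V → ZMod k, IsCircularColoring G k c

/-- The oriented edge periodic colouring number: the largest `k` such that `G` is
circularly `k`-partite. -/
noncomputable def chiO {V : Type*} (G : SimpleGraph V) : ℕ :=
  sSup {k | CircularlyPartite G k}

/-- `G` is a path graph. -/
def IsPathGraph {V : Type*} (G : SimpleGraph V) : Prop :=
  ∃ n, Nonempty (G ≃g pathGraph n)

/-- `G` is an extended star graph: a tree with exactly one vertex of degree at least 3. -/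
def IsExtendedStar {V : Type*} [Fintype V] (G : SimpleGraph V) [DecidableRel G.Adj] : Prop :=
  G.IsTree ∧ ∃! v : V, 3 ≤ G.degree v

/-- A (not necessarily proper) vertex colouring is `t`-periodic if every path of length `t`
has endpoints of the same colour. -/
def IsPeriodicColoring {V : Type*} (G : SimpleGraph V) (t : ℕ) {α : Type*} (c : V → α) : Prop :=
  ∀ (u v : V) (p : G.Walk u v), p.IsPath → p.length = t → c u = c v

/-- The vertex `t`-periodic colouring number: the largest `k` such that `G` admits a
`t`-periodic colouring using exactly `k` colours. -/
noncomputable def chiT {V : Type*} (G : SimpleGraph V) (t : ℕ) : ℕ :=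
  sSup {k | ∃ c : V → Fin k, Surjective c ∧ IsPeriodicColoring G t c}

/-- A proper edge colouring: distinct edges sharing an endpoint get distinct colours. -/
def IsProperEdgeColoring {V : Type*} (G : SimpleGraph V) {α : Type*} (c : G.edgeSet → α) : Prop :=
  ∀ e f : G.edgeSet, e ≠ f → (∃ v, v ∈ (e : Sym2 V) ∧ v ∈ (f : Sym2 V)) → c e ≠ c f

/-- The edge chromatic number of `G`. -/
noncomputable def chiStar {V : Type*} (G : SimpleGraph V) : ℕ :=
  sInf {k | ∃ c : G.edgeSet → Fin k, IsProperEdgeColoring G c}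

/-- the path graph of length `M` (on `M+1` vertices) is circularly
`k`-partite for each `k ∈ {1, …, 2M}`. -/
theorem stmt_1 (M : ℕ) (hM : 1 ≤ M) :
    ∀ k, 1 ≤ k → k ≤ 2 * M → CircularlyPartite (pathGraph (M + 1)) k := by
  intro k hk1 hk2
  haveI : NeZero k := ⟨by omega⟩
  refine ⟨hk1, fun v w => if (v : ℕ) < (w : ℕ) then ((v : ℕ) : ZMod k)
      else ((2 * M - 1 - (w : ℕ) : ℕ) : ZMod k), ?_, ?_⟩
  · intro j
    have hjk : j.val < k := ZMod.val_lt j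
    by_cases hjM : j.val < M
    · refine ⟨⟨j.val, by omega⟩, ⟨j.val + 1, by omega⟩, ?_, ?_⟩
      · rw [pathGraph_adj]; left; rfl
      · simp only [if_pos (Nat.lt_succ_self _)]
        rw [ZMod.natCast_val, ZMod.cast_id]
    · refine ⟨⟨2 * M - j.val, by omega⟩, ⟨2 * M - 1 - j.val, by omega⟩, ?_, ?_⟩
      · rw [pathGraph_adj]; right; simp; omega
      · have h1 : ¬ ((2 * M - j.val : ℕ) < (2 * M - 1 - j.val : ℕ)) := by omega
        simp only [if_neg h1]
        have h2 : 2 * M - 1 - (2 * M - 1 - j.val) = j.val := by omega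
        rw [h2, ZMod.natCast_val, ZMod.cast_id]
  · intro v w z hvw hwz hzv
    rw [pathGraph_adj] at hvw hwz
    have hne : (z : ℕ) ≠ (v : ℕ) := fun h => hzv (Fin.ext h)
    rcases hvw with h1 | h1 <;> rcases hwz with h2 | h2
    · -- forward: v+1 = w, w+1 = z
      have hv : (v : ℕ) < (w : ℕ) := by omega
      have hw : (w : ℕ) < (z : ℕ) := by omega
      simp only [if_pos hv, if_pos hw]
      rw [← h1]; push_cast; ring
    · omega
    · omega
    · -- backward: w+1 = v, z+1 = w
      have hv : ¬ ((v : ℕ) < (w : ℕ)) := by omega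
      have hw : ¬ ((w : ℕ) < (z : ℕ)) := by omega
      simp only [if_neg hv, if_neg hw]
      have hwM : (w : ℕ) ≤ M := by omega
      have h3 : 2 * M - 1 - (z : ℕ) = (2 * M - 1 - (w : ℕ)) + 1 := by omega
      rw [h3]; push_cast; ring
end

section
/- An extended star graph of diameter M is circularly k-partite for each k in {1,…,M}. -/
open SimpleGraph Function

section Aux

variable {V : Type*} [DecidableEq V] {G : SimpleGraph V}

private lemma dist_split (hconn : G.Connected) {x y w : V} (p : G.Walk x y)
    (hp : p.length = G.dist x y) (hw : w ∈ p.support) :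
    G.dist x w + G.dist w y = G.dist x y := by
  have h1 := SimpleGraph.dist_le (p.takeUntil w hw)
  have h2 := SimpleGraph.dist_le (p.dropUntil w hw)
  have hlen : (p.takeUntil w hw).length + (p.dropUntil w hw).length = p.length := by
    rw [← SimpleGraph.Walk.length_append, SimpleGraph.Walk.take_spec]
  have h3 := hconn.dist_triangle (u := x) (v := w) (w := y)
  omega

private lemma exists_parent (hconn : G.Connected) {x b : V} (hb : 0 < G.dist x b) :
    ∃ a, G.Adj a b ∧ G.dist x a + 1 = G.dist x b := by
  obtain ⟨p, hp⟩ := hconn.exists_walk_length_eq_dist x b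
  have hlen : 0 < p.length := by omega
  have hi : p.length - 1 < p.length := by omega
  have hadj : G.Adj (p.getVert (p.length - 1)) b := by
    have := p.adj_getVert_succ hi
    rwa [show p.length - 1 + 1 = p.length by omega, p.getVert_length] at this
  have hmem : p.getVert (p.length - 1) ∈ p.support :=
    SimpleGraph.Walk.mem_support_iff_exists_getVert.mpr ⟨p.length - 1, rfl, le_of_lt hi⟩
  have hsplit := dist_split hconn p hp hmem
  have hone : G.dist (p.getVert (p.length - 1)) b = 1 := dist_eq_one_iff_adj.mpr hadj
  exact ⟨p.getVert (p.length - 1), hadj, by omega⟩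

private lemma exists_level (hconn : G.Connected) {x : V} :
    ∀ n, (∃ b : V, G.dist x b = n) → ∀ i ≤ n, ∃ b, G.dist x b = i := by
  intro n
  induction n with
  | zero => intro _ i hi; exact ⟨x, by simpa [Nat.le_zero.mp hi] using SimpleGraph.dist_self⟩
  | succ n ih =>
    rintro ⟨b, hb⟩ i hi
    rcases Nat.lt_or_ge i (n + 1) with h | h
    · obtain ⟨a, _, ha⟩ := exists_parent hconn (x := x) (b := b) (by omega)
      exact ih ⟨a, by omega⟩ i (by omega)
    · exact ⟨b, by omega⟩

private lemma exists_levels_adj (hconn : G.Connected) {x y : V} {i : ℕ} (hi : i < G.dist x y) :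
    ∃ a b, G.Adj a b ∧ G.dist x a = i ∧ G.dist x b = i + 1 := by
  obtain ⟨b, hb⟩ := exists_level hconn (G.dist x y) ⟨y, rfl⟩ (i + 1) (by omega)
  obtain ⟨a, hadj, ha⟩ := exists_parent hconn (x := x) (b := b) (by omega)
  exact ⟨a, b, hadj, by omega, hb⟩

private lemma adj_dist_ne (htree : G.IsTree) (x : V) {v w : V} (h : G.Adj v w) :
    G.dist x v ≠ G.dist x w := by
  intro he
  have hconn := htree.isConnected
  obtain ⟨p, hp, hlp⟩ := hconn.exists_path_of_dist x v
  have hw : w ∉ p.support := by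
    intro hmem
    have hsplit := dist_split hconn p hlp hmem
    have h1 : G.dist w v = 1 := dist_eq_one_iff_adj.mpr h.symm
    omega
  have hr : (SimpleGraph.Walk.cons h.symm p.reverse).IsPath :=
    hp.reverse.cons (by simpa using hw)
  obtain ⟨q, hq, hlq⟩ := hconn.exists_path_of_dist w x
  have heq := htree.IsAcyclic.path_unique ⟨_, hr⟩ ⟨q, hq⟩
  have hlen : (SimpleGraph.Walk.cons h.symm p.reverse).length = q.length := by
    rw [Subtype.mk.injEq] at heq; rw [heq]
  simp only [SimpleGraph.Walk.length_cons, SimpleGraph.Walk.length_reverse] at hlen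
  rw [dist_comm] at hlq
  omega

private lemma parent_unique (htree : G.IsTree) (x : V) {v w z : V}
    (hv : G.Adj w v) (hz : G.Adj w z)
    (hdv : G.dist x v + 1 = G.dist x w) (hdz : G.dist x z + 1 = G.dist x w) : v = z := by
  have hconn := htree.isConnected
  obtain ⟨p, hp, hlp⟩ := hconn.exists_path_of_dist x v
  obtain ⟨q, hq, hlq⟩ := hconn.exists_path_of_dist x z
  have hwp : w ∉ p.support := by
    intro hmem
    have hsplit := dist_split hconn p hlp hmem
    have h0 : 0 < G.dist w v := hconn.pos_dist_of_ne hv.ne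
    omega
  have hwq : w ∉ q.support := by
    intro hmem
    have hsplit := dist_split hconn q hlq hmem
    have h0 : 0 < G.dist w z := hconn.pos_dist_of_ne hz.ne
    omega
  have hr1 : (SimpleGraph.Walk.cons hv p.reverse).IsPath := hp.reverse.cons (by simpa using hwp)
  have hr2 : (SimpleGraph.Walk.cons hz q.reverse).IsPath := hq.reverse.cons (by simpa using hwq)
  have heq := htree.IsAcyclic.path_unique ⟨_, hr1⟩ ⟨_, hr2⟩
  rw [Subtype.mk.injEq] at heq
  have := congrArg (fun r : G.Walk w x => r.getVert 1) heq
  simpa [SimpleGraph.Walk.getVert_cons_succ, SimpleGraph.Walk.getVert_zero] using this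

end Aux

/-- an extended star graph of diameter `M` is circularly `k`-partite for
each `k ∈ {1, …, M}`. -/
theorem stmt_2 {V : Type*} [Fintype V] (G : SimpleGraph V) [DecidableRel G.Adj]
    (hstar : IsExtendedStar G) (M : ℕ) (hdiam : G.diam = M) :
    ∀ k, 1 ≤ k → k ≤ M → CircularlyPartite G k := by
  classical
  intro k hk1 hkM
  haveI : NeZero k := ⟨by omega⟩
  obtain ⟨htree, x, hx3, hxuniq⟩ := hstar
  have hconn := htree.isConnected
  haveI : Nonempty V := hconn.nonempty
  refine ⟨hk1, fun v w =>
    if G.dist x v < G.dist x w then (G.dist x v : ZMod k) else -(G.dist x w : ZMod k) - 1, ?_, ?_⟩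
  · -- surjectivity of colours
    obtain ⟨u, v, huv⟩ := exists_dist_eq_diam (G := G)
    set y := if G.dist x u ≤ G.dist x v then v else u with hy
    have hL : k ≤ 2 * G.dist x y := by
      have ht : G.dist u v ≤ G.dist u x + G.dist x v := hconn.dist_triangle
      have hc : G.dist u x = G.dist x u := dist_comm
      by_cases hcase : G.dist x u ≤ G.dist x v <;> simp only [hy, hcase, if_true, if_false,
        reduceIte] <;> omega
    intro j
    have hjk : j.val < k := ZMod.val_lt j
    by_cases hn : j.val < G.dist x y
    · obtain ⟨a, b, hab, ha, hb⟩ := exists_levels_adj hconn hn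
      refine ⟨a, b, hab, ?_⟩
      dsimp only
      rw [if_pos (by omega), ha]
      exact ZMod.natCast_rightInverse j
    · have hi : k - j.val - 1 < G.dist x y := by omega
      obtain ⟨a, b, hab, ha, hb⟩ := exists_levels_adj hconn hi
      refine ⟨b, a, hab.symm, ?_⟩
      dsimp only
      rw [if_neg (by omega), ha]
      have h2 : ((k - j.val - 1 + 1 : ℕ) : ZMod k) = -j := by
        rw [show k - j.val - 1 + 1 = k - j.val by omega,
          Nat.cast_sub (le_of_lt hjk), ZMod.natCast_self, ZMod.natCast_rightInverse j]
        ring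
      push_cast at h2 ⊢
      linear_combination -h2
  · -- the step condition
    intro v w z hvw hwz hzv
    have h1 : G.dist x v ≠ G.dist x w := adj_dist_ne htree x hvw
    have h2 : G.dist x w ≠ G.dist x z := adj_dist_ne htree x hwz
    have hb1 : G.dist x w ≤ G.dist x v + 1 := by
      have := hconn.dist_triangle (u := x) (v := v) (w := w)
      have := dist_eq_one_iff_adj.mpr hvw
      omega
    have hb2 : G.dist x v ≤ G.dist x w + 1 := by
      have := hconn.dist_triangle (u := x) (v := w) (w := v)
      have := dist_eq_one_iff_adj.mpr hvw.symm
      omega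
    have hb3 : G.dist x z ≤ G.dist x w + 1 := by
      have := hconn.dist_triangle (u := x) (v := w) (w := z)
      have := dist_eq_one_iff_adj.mpr hwz
      omega
    have hb4 : G.dist x w ≤ G.dist x z + 1 := by
      have := hconn.dist_triangle (u := x) (v := z) (w := w)
      have := dist_eq_one_iff_adj.mpr hwz.symm
      omega
    rcases Nat.lt_or_ge (G.dist x v) (G.dist x w) with hvw' | hvw'
    · -- outward step v → w
      have hw1 : G.dist x w = G.dist x v + 1 := by omega
      rcases Nat.lt_or_ge (G.dist x w) (G.dist x z) with hwz' | hwz'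
      · -- outward again
        dsimp only
        rw [if_pos hvw', if_pos hwz', hw1]
        push_cast; ring
      · -- inward: impossible, z would be a second parent equal to v
        exfalso
        have hz1 : G.dist x z + 1 = G.dist x w := by omega
        exact hzv (parent_unique htree x hwz hvw.symm hz1 (by omega))
    · -- inward step v → w
      have hw1 : G.dist x v = G.dist x w + 1 := by omega
      rcases Nat.lt_or_ge (G.dist x z) (G.dist x w) with hwz' | hwz'
      · -- inward again
        have hz1 : G.dist x w = G.dist x z + 1 := by omega
        dsimp only
        rw [if_neg (by omega), if_neg (by omega), hz1]
        push_cast; ring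
      · -- inward then outward: w must be the centre x
        have hz1 : G.dist x z = G.dist x w + 1 := by omega
        have hw0 : G.dist x w = 0 := by
          by_contra h0
          obtain ⟨a, haw, ha⟩ := exists_parent hconn (x := x) (b := w) (by omega)
          have hav : a ≠ v := fun h => by rw [h] at ha; omega
          have haz : a ≠ z := fun h => by rw [h] at ha; omega
          have hsub : ({v, z, a} : Finset V) ⊆ G.neighborFinset w := by
            intro t ht
            simp only [Finset.mem_insert, Finset.mem_singleton] at ht
            rcases ht with rfl | rfl | rfl <;>
              simp [SimpleGraph.mem_neighborFinset, hvw.symm, hwz, haw.symm]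
          have hcard : ({v, z, a} : Finset V).card = 3 := by
            rw [Finset.card_insert_of_notMem (by simp [Ne.symm hzv, hav.symm]),
              Finset.card_insert_of_notMem (by simp [haz.symm]), Finset.card_singleton]
          have hdeg : 3 ≤ G.degree w := by
            rw [← SimpleGraph.card_neighborFinset_eq_degree, ← hcard]
            exact Finset.card_le_card hsub
          have hwx : w = x := hxuniq w hdeg
          rw [hwx, SimpleGraph.dist_self] at h0
          exact h0 rfl
        dsimp only
        rw [if_pos (by omega), if_neg (by omega), hw0]
        push_cast; ring
end

section
/- If G is a connected simple graph which is neither a path nor an extended star graph, then for every k ≥ 1, G is circularly k-partite if and only if k divides χᵒ(G), where χᵒ(G) is the largest k for which G is circularly k-partite. -/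
/-!
Call a dart `e = (v, w)` a non-backtracking successor of `d = (u, v)` when `w ≠ u`. A circular
`k`-colouring of the darts grows by `1` along every such step, hence by `t` along any zigzag of
such steps of net length `t`. So if some closed zigzag has positive net length `D`, then `G` is
circularly `k`-partite iff `0 < k` and `k` divides the net length of every closed zigzag: given
that, fix a base dart in every zigzag class and colour each dart by its net distance from the
base mod `k`; all colours occur since `k ≤ D`. This set of `k` is closed under `lcm` and divisors
and is bounded by `D`, so it consists of the divisors of its maximum `χᵒ(G)`.

A closed zigzag of positive net length exists unless `G` is a path or an extended star: go around
a cycle, or else run along the path between two vertices of degree `≥ 3` and back, turning around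
at each end by means of a third neighbour.
-/

open SimpleGraph Function

lemma Nat.mem_iff_dvd_sSup {S : Set ℕ} (hne : S.Nonempty) (hbdd : BddAbove S) (h₀ : 0 ∉ S)
    (hlcm : ∀ a ∈ S, ∀ b ∈ S, Nat.lcm a b ∈ S) (hdvd : ∀ a ∈ S, ∀ b, b ∣ a → b ∈ S) (k : ℕ) :
    k ∈ S ↔ k ∣ sSup S := by
  have hmax := Nat.sSup_mem hne hbdd
  refine ⟨fun hk => ?_, hdvd _ hmax k⟩
  have hl := hlcm k hk _ hmax
  have hpos : 0 < Nat.lcm k (sSup S) := Nat.pos_of_ne_zero fun h => h₀ (h ▸ hl)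
  have : Nat.lcm k (sSup S) = sSup S :=
    le_antisymm (le_csSup hbdd hl) (Nat.le_of_dvd hpos (Nat.dvd_lcm_right _ _))
  exact this ▸ Nat.dvd_lcm_left _ _

namespace SimpleGraph

variable {V : Type*} {G : SimpleGraph V}

namespace Dart

def IsNonbacktrackingSucc (d e : G.Dart) : Prop :=
  d.snd = e.fst ∧ e.snd ≠ d.fst

lemma IsNonbacktrackingSucc.symm {d e : G.Dart} (h : d.IsNonbacktrackingSucc e) :
    e.symm.IsNonbacktrackingSucc d.symm :=
  ⟨h.1.symm, fun he => h.2 he.symm⟩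

/-- `e` is reached from `d` by non-backtracking steps, each taken forwards (counting `+1`) or
backwards (counting `-1`), with net count `t`. -/
inductive Zigzag (d : G.Dart) : G.Dart → ℤ → Prop
  | refl : Zigzag d d 0
  | fwd {e f : G.Dart} {t : ℤ} : Zigzag d e t → e.IsNonbacktrackingSucc f → Zigzag d f (t + 1)
  | bwd {e f : G.Dart} {t : ℤ} : Zigzag d e t → f.IsNonbacktrackingSucc e → Zigzag d f (t - 1)

namespace Zigzag

lemma of_succ {d e : G.Dart} (h : d.IsNonbacktrackingSucc e) : d.Zigzag e 1 := by
  simpa using refl.fwd h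

lemma of_pred {d e : G.Dart} (h : e.IsNonbacktrackingSucc d) : d.Zigzag e (-1) := by
  simpa using refl.bwd h

lemma trans {d e f : G.Dart} {s t : ℤ} (h₁ : d.Zigzag e s) (h₂ : e.Zigzag f t) :
    d.Zigzag f (s + t) := by
  induction h₂ with
  | refl => simpa using h₁
  | fwd _ h ih => rw [← add_assoc]; exact ih.fwd h
  | bwd _ h ih => rw [← add_sub_assoc]; exact ih.bwd h

lemma symm {d e : G.Dart} {t : ℤ} (h : d.Zigzag e t) : e.Zigzag d (-t) := by
  induction h with
  | refl => simpa using refl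
  | fwd _ h ih => simpa [add_comm] using (of_pred h).trans ih
  | bwd _ h ih => simpa [sub_eq_add_neg, add_comm] using (of_succ h).trans ih

lemma dartSymm {d e : G.Dart} {t : ℤ} (h : d.Zigzag e t) : e.symm.Zigzag d.symm t := by
  induction h with
  | refl => exact refl
  | fwd _ h ih => simpa [add_comm] using (of_succ h.symm).trans ih
  | bwd _ h ih => simpa [sub_eq_add_neg, add_comm] using (of_pred h.symm).trans ih

lemma exists_of_nonneg_of_le {d e : G.Dart} {t s : ℤ} (h : d.Zigzag e t) (hs₀ : 0 ≤ s)
    (hst : s ≤ t) : ∃ f, d.Zigzag f s := by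
  induction h with
  | refl => exact ⟨d, le_antisymm hst hs₀ ▸ refl⟩
  | @fwd _ f _ h hf ih =>
    rcases hst.lt_or_eq with hlt | rfl
    · exact ih (by omega)
    · exact ⟨f, h.fwd hf⟩
  | bwd _ _ ih => exact ih (by omega)

end Zigzag

lemma zigzag_symm_of_three_le_degree {v : V} [Fintype (G.neighborSet v)]
    (hv : 3 ≤ G.degree v) (d : G.Dart) (hd : d.snd = v) : d.Zigzag d.symm 1 := by
  classical
  obtain ⟨⟨u, w⟩, huw⟩ := d
  obtain rfl : w = v := hd
  have hu : u ∈ G.neighborFinset w := (mem_neighborFinset _ _ _).2 huw.symm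
  have hcard : 1 < ((G.neighborFinset w).erase u).card := by
    rw [Finset.card_erase_of_mem hu, card_neighborFinset_eq_degree]
    omega
  obtain ⟨a, ha, b, hb, hab⟩ := Finset.one_lt_card.1 hcard
  rw [Finset.mem_erase, mem_neighborFinset] at ha hb
  -- `(u, w) → (w, a) ← (b, w) → (w, u)`
  have h₁ : Zigzag ⟨(u, w), huw⟩ ⟨(w, a), ha.2⟩ 1 := .of_succ ⟨rfl, ha.1⟩
  have h₂ : Zigzag ⟨(w, a), ha.2⟩ ⟨(b, w), hb.2.symm⟩ (-1) := .of_pred ⟨rfl, hab⟩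
  have h₃ : Zigzag ⟨(b, w), hb.2.symm⟩ ⟨(w, u), huw.symm⟩ 1 :=
    .of_succ ⟨rfl, Ne.symm hb.1⟩
  simpa using h₁.trans (h₂.trans h₃)

end Dart

namespace Walk

lemma IsPath.zigzag_firstDart_lastDart {u v : V} {p : G.Walk u v} (hp : p.IsPath)
    (hnil : ¬p.Nil) : (p.firstDart hnil).Zigzag (p.lastDart hnil) (p.length - 1) := by
  induction p with
  | nil => exact absurd Nil.nil hnil
  | @cons u v w h q ih =>
    rw [cons_isPath_iff] at hp
    cases q with
    | nil =>
      have : (cons h Walk.nil).lastDart hnil = (cons h Walk.nil).firstDart hnil :=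
        Dart.ext _ _ (by simp)
      simpa [this] using Dart.Zigzag.refl
    | cons h' q' =>
      have hq : ¬(cons h' q').Nil := not_nil_cons
      have hstep : (firstDart (cons h (cons h' q')) hnil).IsNonbacktrackingSucc
          ((cons h' q').firstDart hq) :=
        ⟨rfl, fun heq => hp.2 <|
          (show (cons h' q').snd = u from heq) ▸ List.mem_of_mem_tail (snd_mem_tail_support hq)⟩
      have hlast : (cons h (cons h' q')).lastDart hnil = (cons h' q').lastDart hq :=
        Dart.ext _ _ (by simp [penultimate_cons_of_not_nil _ _ hq])
      rw [hlast, length_cons]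
      convert (Dart.Zigzag.of_succ hstep).trans (ih hp.1 hq) using 1
      push_cast; ring

lemma IsCycle.exists_closed_zigzag {v : V} {c : G.Walk v v} (hc : c.IsCycle) :
    ∃ (d : G.Dart) (t : ℤ), 0 < t ∧ d.Zigzag d t := by
  cases c with
  | nil => exact absurd hc not_isCycle_nil
  | @cons _ x _ h q =>
    rw [cons_isCycle_iff] at hc
    have hq : ¬q.Nil := fun hq => h.ne hq.eq.symm
    have hsnd : q.snd ≠ v := fun heq => hc.2 <| by
      have := List.mem_map_of_mem (f := Dart.edge) (firstDart_mem_darts hq)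
      rwa [edge_firstDart, heq, Sym2.eq_swap] at this
    have hpen : x ≠ q.penultimate := fun heq => hc.2 <| by
      have := List.mem_map_of_mem (f := Dart.edge) (lastDart_mem_darts hq)
      rwa [edge_lastDart, ← heq, Sym2.eq_swap] at this
    let d : G.Dart := ⟨(v, x), h⟩
    have h₁ : d.IsNonbacktrackingSucc (q.firstDart hq) := ⟨rfl, hsnd⟩
    have h₂ : (q.lastDart hq).IsNonbacktrackingSucc d := ⟨rfl, hpen⟩
    refine ⟨d, q.length + 1, by positivity, ?_⟩
    convert (Dart.Zigzag.of_succ h₁).trans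
      ((hc.1.zigzag_firstDart_lastDart hq).trans (.of_succ h₂)) using 1
    ring

end Walk

lemma Preconnected.exists_closed_zigzag_of_three_le_degree (hG : G.Preconnected) {u v : V}
    (huv : u ≠ v) [Fintype (G.neighborSet u)] [Fintype (G.neighborSet v)]
    (hu : 3 ≤ G.degree u) (hv : 3 ≤ G.degree v) :
    ∃ (d : G.Dart) (t : ℤ), 0 < t ∧ d.Zigzag d t := by
  classical
  obtain ⟨p, hp⟩ := (hG u v).some.toPath
  have hnil : ¬p.Nil := Walk.not_nil_of_ne huv
  have hlen : 0 < p.length := Walk.not_nil_iff_lt_length.1 hnil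
  have hturn_v := Dart.zigzag_symm_of_three_le_degree hv (p.lastDart hnil) rfl
  have hturn_u := Dart.zigzag_symm_of_three_le_degree hu (p.firstDart hnil).symm rfl
  have hpath := hp.zigzag_firstDart_lastDart hnil
  refine ⟨p.firstDart hnil, 2 * p.length, by omega, ?_⟩
  convert hpath.trans (hturn_v.trans (hpath.dartSymm.trans (Dart.symm_symm _ ▸ hturn_u))) using 1
  ring

lemma Walk.IsPath.three_le_degree_getVert [Fintype V] [DecidableRel G.Adj] {x y w : V}
    {p : G.Walk x y} (hp : p.IsPath) {i : ℕ} (hi₀ : 0 < i) (hi : i < p.length)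
    (hw : G.Adj (p.getVert i) w) (hwp : w ∉ p.support) : 3 ≤ G.degree (p.getVert i) := by
  classical
  have hprev : G.Adj (p.getVert (i - 1)) (p.getVert i) := by
    simpa [Nat.sub_add_cancel hi₀] using p.adj_getVert_succ (i := i - 1) (by omega)
  have hnext : G.Adj (p.getVert i) (p.getVert (i + 1)) := p.adj_getVert_succ hi
  have hne : p.getVert (i - 1) ≠ p.getVert (i + 1) := fun h => by
    have := hp.getVert_injOn (by simp only [Set.mem_ofPred_eq]; omega)
      (by simp only [Set.mem_ofPred_eq]; omega) h
    omega
  have hw' : ∀ j, p.getVert j ≠ w := fun j h => hwp (h ▸ p.getVert_mem_support j)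
  have hsub : {p.getVert (i - 1), p.getVert (i + 1), w} ⊆ G.neighborFinset (p.getVert i) := by
    simp [Finset.insert_subset_iff, hprev.symm, hnext, hw]
  have := Finset.card_le_card hsub
  rwa [Finset.card_insert_of_notMem (by simp [hne, hw']), Finset.card_pair (hw' _),
    card_neighborFinset_eq_degree] at this

lemma exists_isPath_forall_length_le [Fintype V] [Nonempty V] :
    ∃ (x y : V) (p : G.Walk x y), p.IsPath ∧
      ∀ (x' y' : V) (q : G.Walk x' y'), q.IsPath → q.length ≤ p.length := by
  classical
  have : Nonempty (Σ x y, G.Path x y) := ⟨⟨Classical.arbitrary V, _, Path.nil⟩⟩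
  obtain ⟨⟨x, y, p⟩, hp⟩ :=
    Finite.exists_max fun q : Σ x y, G.Path x y => (q.2.2 : G.Walk q.1 q.2.1).length
  exact ⟨x, y, p, p.2, fun x' y' q hq => hp ⟨x', y', ⟨q, hq⟩⟩⟩

lemma Connected.exists_isHamiltonian_of_degree_le_two [Fintype V] [DecidableEq V]
    [DecidableRel G.Adj] (hG : G.Connected) (hdeg : ∀ v, G.degree v ≤ 2) :
    ∃ (x y : V) (p : G.Walk x y), p.IsHamiltonian := by
  have := hG.nonempty
  obtain ⟨x, y, p, hp, hmax⟩ := G.exists_isPath_forall_length_le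
  refine ⟨x, y, p, hp.isHamiltonian_of_mem fun z => ?_⟩
  by_contra hz
  obtain ⟨⟨⟨b, w⟩, hbw⟩, -, hb, hw⟩ :=
    (hG.preconnected x z).some.exists_boundary_dart {v | v ∈ p.support} p.start_mem_support hz
  simp only [Set.mem_ofPred_eq] at hb hw
  obtain ⟨i, rfl, hi⟩ := Walk.mem_support_iff_exists_getVert.1 hb
  rcases Nat.eq_zero_or_pos i with rfl | hi₀
  · rw [Walk.getVert_zero] at hbw
    have := hmax _ _ _ (Walk.cons_isPath_iff _ _ |>.2 ⟨hp, hw⟩ : (Walk.cons hbw.symm p).IsPath)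
    simp at this
  rcases hi.lt_or_eq with hi' | rfl
  · have := hp.three_le_degree_getVert hi₀ hi' hbw hw
    have := hdeg (p.getVert i)
    omega
  · rw [Walk.getVert_length] at hbw
    have := hmax _ _ _ (hp.concat hw hbw)
    simp at this

lemma IsTree.isPathGraph_of_isHamiltonian [Fintype V] [DecidableEq V] (hT : G.IsTree) {x y : V}
    {p : G.Walk x y} (hp : p.IsHamiltonian) : IsPathGraph G := by
  classical
  have hedges : G.edgeFinset = p.edges.toFinset := by
    refine (Finset.eq_of_subset_of_card_le (fun e he => ?_) ?_).symm
    · exact mem_edgeFinset.2 (p.edges_subset_edgeSet (List.mem_toFinset.1 he))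
    · rw [List.toFinset_card_of_nodup hp.isPath.edges_nodup, Walk.length_edges, hp.length_eq]
      have := hT.card_edgeFinset
      omega
  have htop : p.toSubgraph = ⊤ := by
    refine Subgraph.ext (by simp [hp.setOfPred_support]) ?_
    ext a b
    rw [Subgraph.top_adj, ← Subgraph.mem_edgeSet, Walk.mem_edges_toSubgraph, ← mem_edgeSet,
      ← mem_edgeFinset, hedges, List.mem_toFinset]
  exact ⟨_, ⟨(hp.isPath.pathGraphIsoToSubgraph.trans (htop ▸ Subgraph.topIso)).symm⟩⟩

lemma Connected.exists_closed_zigzag [Fintype V] [DecidableRel G.Adj] (hG : G.Connected)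
    (hpath : ¬IsPathGraph G) (hstar : ¬IsExtendedStar G) :
    ∃ (d : G.Dart) (t : ℤ), 0 < t ∧ d.Zigzag d t := by
  classical
  by_cases hac : G.IsAcyclic
  swap
  · simp only [IsAcyclic, not_forall, not_not] at hac
    obtain ⟨v, c, hc⟩ := hac
    exact hc.exists_closed_zigzag
  obtain ⟨u, hu⟩ | hdeg := exists_or_forall_not fun v => 3 ≤ G.degree v
  · obtain ⟨v, hv, hvu⟩ : ∃ v, 3 ≤ G.degree v ∧ v ≠ u := by
      by_contra! h
      exact hstar ⟨⟨hG, hac⟩, u, hu, h⟩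
    exact hG.preconnected.exists_closed_zigzag_of_three_le_degree hvu hv hu
  · obtain ⟨x, y, p, hp⟩ := hG.exists_isHamiltonian_of_degree_le_two fun v => by
      have := hdeg v
      omega
    exact absurd (IsTree.isPathGraph_of_isHamiltonian ⟨hG, hac⟩ hp) hpath

end SimpleGraph

section Coloring

variable {V : Type*} {G : SimpleGraph V}

namespace IsCircularColoring

variable {k : ℕ} {c : V → V → ZMod k}

lemma apply_succ (hc : IsCircularColoring G k c) {d e : G.Dart}
    (h : d.IsNonbacktrackingSucc e) : c e.fst e.snd = c d.fst d.snd + 1 := by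
  obtain ⟨⟨u, v⟩, huv⟩ := d
  obtain ⟨⟨v', w⟩, hvw⟩ := e
  obtain ⟨rfl : v = v', hwu : w ≠ u⟩ := h
  exact hc.2 u v w huv hvw hwu

lemma eq_add_of_zigzag (hc : IsCircularColoring G k c) {d e : G.Dart} {t : ℤ}
    (h : d.Zigzag e t) : c e.fst e.snd = c d.fst d.snd + t := by
  induction h with
  | refl => simp
  | fwd _ h ih => rw [hc.apply_succ h, ih]; push_cast; ring
  | bwd _ h ih => rw [hc.apply_succ h] at ih; push_cast; linear_combination ih

end IsCircularColoring

lemma CircularlyPartite.of_dvd {n k : ℕ} (h : CircularlyPartite G n) (hkn : k ∣ n) :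
    CircularlyPartite G k := by
  obtain ⟨hn, c, hsurj, hstep⟩ := h
  have hk := Nat.pos_of_dvd_of_pos hkn hn
  have : NeZero k := ⟨hk.ne'⟩
  let π := ZMod.castHom hkn (ZMod k)
  refine ⟨hk, fun v w => π (c v w), fun j => ?_, fun u v w huv hvw hwu => ?_⟩
  · obtain ⟨v, w, hvw, hc⟩ := hsurj (j.val : ZMod n)
    exact ⟨v, w, hvw, by simp [hc]⟩
  · simp [hstep u v w huv hvw hwu]

def DvdClosedZigzags (G : SimpleGraph V) (n : ℕ) : Prop :=
  ∀ (d : G.Dart) (t : ℤ), d.Zigzag d t → (n : ℤ) ∣ t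

lemma CircularlyPartite.dvdClosedZigzags {n : ℕ} (h : CircularlyPartite G n) :
    DvdClosedZigzags G n := by
  obtain ⟨-, c, hc⟩ := h
  intro d t hdt
  rw [← ZMod.intCast_zmod_eq_zero_iff_dvd]
  simpa using hc.eq_add_of_zigzag hdt

lemma DvdClosedZigzags.lcm {a b : ℕ} (ha : DvdClosedZigzags G a) (hb : DvdClosedZigzags G b) :
    DvdClosedZigzags G (Nat.lcm a b) := fun d t hdt =>
  Int.natCast_dvd.2 <| Nat.lcm_dvd (Int.natCast_dvd.1 (ha d t hdt)) (Int.natCast_dvd.1 (hb d t hdt))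

lemma DvdClosedZigzags.exists_potential {n : ℕ} (h : DvdClosedZigzags G n) :
    ∃ φ : G.Dart → ZMod n, ∀ d e (t : ℤ), d.Zigzag e t → φ e = φ d + t := by
  let S : Setoid G.Dart :=
    ⟨fun d e => ∃ t, d.Zigzag e t, ⟨fun _ => ⟨0, .refl⟩, fun ⟨t, h⟩ => ⟨-t, h.symm⟩,
      fun ⟨s, h⟩ ⟨t, h'⟩ => ⟨s + t, h.trans h'⟩⟩⟩
  choose τ hτ using fun d => Quotient.exact (Quotient.out_eq (Quotient.mk S d))
  refine ⟨fun d => τ d, fun d e t hde => ?_⟩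
  have hout : (Quotient.mk S d).out = (Quotient.mk S e).out :=
    congrArg _ (Quotient.sound ⟨t, hde⟩)
  have := h _ _ ((hτ e).symm.trans ((hout ▸ hτ d).trans hde))
  rw [← ZMod.intCast_zmod_eq_zero_iff_dvd] at this
  push_cast at this
  linear_combination -this

lemma circularlyPartite_iff_dvdClosedZigzags {d₀ : G.Dart} {D : ℤ} (hD : 0 < D)
    (hcl : d₀.Zigzag d₀ D) {n : ℕ} :
    CircularlyPartite G n ↔ 0 < n ∧ DvdClosedZigzags G n := by
  refine ⟨fun h => ⟨h.1, h.dvdClosedZigzags⟩, fun ⟨hn, h⟩ => ⟨hn, ?_⟩⟩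
  classical
  have : NeZero n := ⟨hn.ne'⟩
  obtain ⟨φ, hφ⟩ := h.exists_potential
  have hnD : (n : ℤ) ≤ D := Int.le_of_dvd hD (h d₀ D hcl)
  refine ⟨fun v w => if hvw : G.Adj v w then φ ⟨(v, w), hvw⟩ else 0, fun j => ?_,
    fun u v w huv hvw hwu => ?_⟩
  · -- `s ≡ j - φ d₀` and `0 ≤ s < n ≤ D`, so some zigzag from `d₀` has net length `s`
    set s : ℕ := (j - φ d₀).val
    obtain ⟨⟨⟨v, w⟩, hvw⟩, hs⟩ := hcl.exists_of_nonneg_of_le (s := s) (by positivity)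
      (by have := ZMod.val_lt (j - φ d₀); omega)
    refine ⟨v, w, hvw, ?_⟩
    simp [dif_pos hvw, hφ _ _ _ hs, s]
  · simp only [dif_pos huv, dif_pos hvw]
    simpa using hφ ⟨(u, v), huv⟩ ⟨(v, w), hvw⟩ _ (.of_succ ⟨rfl, hwu⟩)

lemma circularlyPartite_iff_dvd_chiO {d₀ : G.Dart} {D : ℤ} (hD : 0 < D)
    (hcl : d₀.Zigzag d₀ D) (k : ℕ) : CircularlyPartite G k ↔ k ∣ chiO G := by
  have hiff n := circularlyPartite_iff_dvdClosedZigzags (n := n) hD hcl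
  have hone : CircularlyPartite G 1 := (hiff 1).2 ⟨one_pos, fun _ _ _ => one_dvd _⟩
  have hbdd : BddAbove {n | CircularlyPartite G n} := ⟨D.toNat, fun n hn => by
    have := Int.le_of_dvd hD (hn.dvdClosedZigzags d₀ D hcl)
    omega⟩
  have hlcm (a) (ha : CircularlyPartite G a) (b) (hb : CircularlyPartite G b) :
      CircularlyPartite G (Nat.lcm a b) :=
    (hiff _).2 ⟨Nat.lcm_pos ha.1 hb.1, ha.dvdClosedZigzags.lcm hb.dvdClosedZigzags⟩
  exact Nat.mem_iff_dvd_sSup ⟨1, hone⟩ hbdd (fun h => lt_irrefl 0 h.1) hlcm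
    (fun _ ha _ hba => ha.of_dvd hba) k

end Coloring

/-- for a connected graph which is neither a path nor an extended star,
`G` is circularly `k`-partite iff `k` divides `χᵒ(G)`. -/
theorem stmt_4 {V : Type*} [Fintype V] (G : SimpleGraph V) [DecidableRel G.Adj]
    (hG : G.Connected) (hpath : ¬ IsPathGraph G) (hstar : ¬ IsExtendedStar G) :
    ∀ k, 1 ≤ k → (CircularlyPartite G k ↔ k ∣ chiO G) := by
  obtain ⟨d, D, hD, hcl⟩ := hG.exists_closed_zigzag hpath hstar
  exact fun k _ => circularlyPartite_iff_dvd_chiO hD hcl k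
end

section
/- Let q, r ≥ 3 be relatively prime integers. If a connected simple graph G contains a cycle of length q and a cycle of length r, then χᵒ(G) = 1. -/
open SimpleGraph Function

lemma support_get_eq_getVert {V : Type*} {G : SimpleGraph V} :
    ∀ {u v : V} (p : G.Walk u v) (i : ℕ) (h : i < p.support.length),
      p.support[i] = p.getVert i := by
  intro u v p
  induction p with
  | nil => intro i h; simp at h; subst h; simp [Walk.getVert_zero]
  | cons hadj q ih =>
    intro i h
    cases i with
    | zero => simp [Walk.getVert_zero]
    | succ n =>
      simp only [Walk.support_cons, Walk.getVert_cons_succ]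
      rw [List.getElem_cons_succ]
      exact ih n (by simpa [Walk.support_cons] using h)

lemma cycle_getVert_inj {V : Type*} {G : SimpleGraph V} {u : V} {p : G.Walk u u}
    (hc : p.IsCycle) {i j : ℕ} (hi1 : 1 ≤ i) (hi2 : i ≤ p.length)
    (hj1 : 1 ≤ j) (hj2 : j ≤ p.length) (h : p.getVert i = p.getVert j) : i = j := by
  have hlen : p.support.length = p.length + 1 := p.length_support
  have hnd : p.support.tail.Nodup := hc.2
  have htl : p.support.tail.length = p.length := by simp [hlen]
  have h1 : i - 1 < p.support.tail.length := by omega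
  have h2 : j - 1 < p.support.tail.length := by omega
  obtain ⟨i', rfl⟩ : ∃ i', i = i' + 1 := ⟨i - 1, by omega⟩
  obtain ⟨j', rfl⟩ : ∃ j', j = j' + 1 := ⟨j - 1, by omega⟩
  have e1 : p.support.tail[i'] = p.getVert (i' + 1) := by
    rw [List.getElem_tail]; exact support_get_eq_getVert p (i' + 1) (by omega)
  have e2 : p.support.tail[j'] = p.getVert (j' + 1) := by
    rw [List.getElem_tail]; exact support_get_eq_getVert p (j' + 1) (by omega)
  have key : i' = j' := (hnd.getElem_inj_iff (hi := by omega) (hj := by omega)).mp (by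
    rw [e1, e2]; exact h)
  omega

lemma dvd_of_cycle {V : Type*} {G : SimpleGraph V} {k : ℕ} (hk : 0 < k)
    {c : V → V → ZMod k} (hcol : IsCircularColoring G k c)
    {u : V} {p : G.Walk u u} (hc : p.IsCycle) (hL : 3 ≤ p.length) :
    k ∣ p.length := by
  set L := p.length with hLdef
  have hadj : ∀ i, i < L → G.Adj (p.getVert i) (p.getVert (i + 1)) :=
    fun i hi => p.adj_getVert_succ hi
  have hne : ∀ i j, 1 ≤ i → i ≤ L → 1 ≤ j → j ≤ L → i ≠ j →
      p.getVert i ≠ p.getVert j := by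
    intro i j h1 h2 h3 h4 h5 heq
    exact h5 (cycle_getVert_inj hc h1 h2 h3 h4 heq)
  have step : ∀ i, i < L →
      c (p.getVert i) (p.getVert (i + 1)) = c (p.getVert 0) (p.getVert 1) + (i : ZMod k) := by
    intro i
    induction i with
    | zero => intro _; simp
    | succ n ih =>
      intro hn
      have hneq : p.getVert (n + 2) ≠ p.getVert n := by
        rcases Nat.eq_zero_or_pos n with rfl | hpos
        · have h02 : p.getVert 2 ≠ p.getVert L :=
            hne 2 L (by omega) (by omega) (by omega) le_rfl (by omega)
          rw [p.getVert_length] at h02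
          simpa [p.getVert_zero] using h02
        · exact hne (n + 2) n (by omega) (by omega) (by omega) (by omega) (by omega)
      have := hcol.2 (p.getVert n) (p.getVert (n + 1)) (p.getVert (n + 2))
        (hadj n (by omega)) (hadj (n + 1) (by omega)) hneq
      rw [this, ih (by omega)]
      push_cast
      ring
  have hlast : c (p.getVert (L - 1)) (p.getVert L)
      = c (p.getVert 0) (p.getVert 1) + ((L - 1 : ℕ) : ZMod k) := by
    have := step (L - 1) (by omega)
    have hh : L - 1 + 1 = L := by omega
    rwa [hh] at this
  have hwrap : c (p.getVert L) (p.getVert 1) = c (p.getVert (L - 1)) (p.getVert L) + 1 := by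
    have hadjL : G.Adj (p.getVert (L - 1)) (p.getVert L) := by
      have := hadj (L - 1) (by omega)
      have hh : L - 1 + 1 = L := by omega
      rwa [hh] at this
    have hadj0 : G.Adj (p.getVert L) (p.getVert 1) := by
      have h1 := hadj 0 (by omega)
      rw [p.getVert_zero] at h1
      show G.Adj (p.getVert p.length) (p.getVert 1)
      rw [p.getVert_length]
      simpa using h1
    exact hcol.2 _ _ _ hadjL hadj0
      (hne 1 (L - 1) le_rfl (by omega) (by omega) (by omega) (by omega))
  have h0L : p.getVert 0 = p.getVert L := by rw [p.getVert_zero, p.getVert_length]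
  rw [h0L] at hlast
  rw [hlast] at hwrap
  have : ((L - 1 : ℕ) : ZMod k) + 1 = 0 := by
    have := hwrap
    -- c L 1 = c L 1 + ((L-1) + 1)
    rw [add_assoc] at this
    exact (left_eq_add.mp this)
  have hcast : ((L : ℕ) : ZMod k) = 0 := by
    have hL1 : ((L : ℕ) : ZMod k) = ((L - 1 : ℕ) : ZMod k) + 1 := by
      have : L = (L - 1) + 1 := by omega
      rw [this]; push_cast; ring
    rw [hL1, ‹((L - 1 : ℕ) : ZMod k) + 1 = 0›]
  exact (ZMod.natCast_eq_zero_iff L k).mp hcast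


/-- if `G` contains cycles of two coprime lengths `q, r ≥ 3`,
then `χᵒ(G) = 1`. -/
theorem stmt_5 {V : Type*} [Fintype V] (G : SimpleGraph V) (hG : G.Connected)
    (q r : ℕ) (hq : 3 ≤ q) (hr : 3 ≤ r) (hqr : Nat.Coprime q r)
    (hcq : ∃ (u : V) (p : G.Walk u u), p.IsCycle ∧ p.length = q)
    (hcr : ∃ (u : V) (p : G.Walk u u), p.IsCycle ∧ p.length = r) :
    chiO G = 1 := by
  obtain ⟨uq, pq, hpq, hpqlen⟩ := hcq
  obtain ⟨ur, pr, hpr, hprlen⟩ := hcr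
  have hset : {k | CircularlyPartite G k} = {1} := by
    ext k
    simp only [Set.mem_setOf_eq, Set.mem_singleton_iff]
    constructor
    · rintro ⟨hk, c, hcol⟩
      have hdq : k ∣ q := by
        have := dvd_of_cycle hk hcol hpq (by omega)
        rwa [hpqlen] at this
      have hdr : k ∣ r := by
        have := dvd_of_cycle hk hcol hpr (by omega)
        rwa [hprlen] at this
      have : k ∣ 1 := hqr ▸ Nat.dvd_gcd hdq hdr
      exact Nat.dvd_one.mp this
    · rintro rfl
      refine ⟨one_pos, fun _ _ => 0, ⟨fun j => ?_, fun v w z _ _ _ => Subsingleton.elim _ _⟩⟩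
      refine ⟨uq, pq.getVert 1, ?_, Subsingleton.elim _ _⟩
      have := pq.adj_getVert_succ (i := 0) (by omega)
      simpa using this
  rw [chiO, hset, csSup_singleton]
end

section
/- If G is a connected simple graph containing K₄ (the complete graph on 4 vertices) as a subgraph, then χᵒ(G) = 1. In particular, χᵒ(K_N) = 1 for all N ≥ 4. -/
open SimpleGraph Function

lemma k4_chiO {V : Type*} (G : SimpleGraph V)
    (h : Nonempty ((⊤ : SimpleGraph (Fin 4)) ↪g G)) : chiO G = 1 := by
  obtain ⟨f⟩ := h
  have hadj : ∀ i j : Fin 4, i ≠ j → G.Adj (f i) (f j) := fun i j hij =>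
    f.map_rel_iff.mpr (by simpa using hij)
  have hne : ∀ i j : Fin 4, i ≠ j → f i ≠ f j := fun i j hij hf =>
    hij (f.injective hf)
  have hset : {k | CircularlyPartite G k} = {1} := by
    ext k
    simp only [Set.mem_setOf_eq, Set.mem_singleton_iff]
    constructor
    · rintro ⟨hk, c, h1, h2⟩
      by_contra hk1
      -- triangle gives 3 = 0, square gives 4 = 0
      have t3 : (3 : ZMod k) = 0 := by
        have e1 := h2 (f 0) (f 1) (f 2) (hadj 0 1 (by decide)) (hadj 1 2 (by decide))
          (hne 2 0 (by decide))
        have e2 := h2 (f 1) (f 2) (f 0) (hadj 1 2 (by decide)) (hadj 2 0 (by decide))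
          (hne 0 1 (by decide))
        have e3 := h2 (f 2) (f 0) (f 1) (hadj 2 0 (by decide)) (hadj 0 1 (by decide))
          (hne 1 2 (by decide))
        have : c (f 0) (f 1) = c (f 0) (f 1) + 3 := by
          linear_combination e1 + e2 + e3
        have := (left_eq_add).mp this
        linear_combination this
      have t4 : (4 : ZMod k) = 0 := by
        have e1 := h2 (f 0) (f 1) (f 2) (hadj 0 1 (by decide)) (hadj 1 2 (by decide))
          (hne 2 0 (by decide))
        have e2 := h2 (f 1) (f 2) (f 3) (hadj 1 2 (by decide)) (hadj 2 3 (by decide))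
          (hne 3 1 (by decide))
        have e3 := h2 (f 2) (f 3) (f 0) (hadj 2 3 (by decide)) (hadj 3 0 (by decide))
          (hne 0 2 (by decide))
        have e4 := h2 (f 3) (f 0) (f 1) (hadj 3 0 (by decide)) (hadj 0 1 (by decide))
          (hne 1 3 (by decide))
        have : c (f 0) (f 1) = c (f 0) (f 1) + 4 := by
          linear_combination e1 + e2 + e3 + e4
        have := (left_eq_add).mp this
        linear_combination this
      have t1 : (1 : ZMod k) = 0 := by linear_combination t4 - t3
      have : ((1 : ℕ) : ZMod k) = 0 := by simpa using t1
      rw [ZMod.natCast_eq_zero_iff] at this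
      exact hk1 (Nat.dvd_one.mp this)
    · rintro rfl
      refine ⟨one_pos, fun _ _ => 0, ?_, ?_⟩
      · intro j
        exact ⟨f 0, f 1, hadj 0 1 (by decide), Subsingleton.elim _ _⟩
      · intro v w z _ _ _
        exact Subsingleton.elim _ _
  rw [chiO, hset, csSup_singleton]

/-- if `G` contains `K₄` as a subgraph then `χᵒ(G) = 1`; in particular
`χᵒ(K_N) = 1` for `N ≥ 4`. -/
theorem stmt_6 {V : Type*} [Fintype V] (G : SimpleGraph V) (hG : G.Connected)
    (h : Nonempty ((⊤ : SimpleGraph (Fin 4)) ↪g G)) :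
    chiO G = 1 ∧ ∀ N : ℕ, 4 ≤ N → chiO (⊤ : SimpleGraph (Fin N)) = 1 := by
  have key : chiO G = 1 := k4_chiO G h
  refine ⟨key, fun N hN => ?_⟩
  apply k4_chiO
  refine ⟨⟨⟨Fin.castLE hN, Fin.castLE_injective hN⟩, ?_⟩⟩
  intro a b
  simp [(Fin.castLE_injective hN).ne_iff]
end

section
/- If G is a connected d-regular simple graph with d ≥ 3, then χᵒ(G) ∈ {1, 2}. -/
open SimpleGraph Function

/-- a connected `d`-regular graph with `d ≥ 3` has `χᵒ(G) ∈ {1, 2}`. -/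
theorem stmt_7 {V : Type*} [Fintype V] (G : SimpleGraph V) [DecidableRel G.Adj]
    (hG : G.Connected) (d : ℕ) (hd : 3 ≤ d) (hreg : G.IsRegularOfDegree d) :
    chiO G = 1 ∨ chiO G = 2 := by
  classical
  -- The set of valid k's
  set S : Set ℕ := {k | CircularlyPartite G k} with hS
  obtain ⟨v0⟩ := hG.nonempty
  have hadj : ∃ v w, G.Adj v w := by
    have h0 : 0 < G.degree v0 := by rw [hreg v0]; omega
    rw [← SimpleGraph.card_neighborFinset_eq_degree] at h0
    obtain ⟨w, hw⟩ := Finset.card_pos.mp h0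
    exact ⟨v0, w, (G.mem_neighborFinset v0 w).mp hw⟩
  have h1 : (1 : ℕ) ∈ S := by
    refine ⟨one_pos, fun _ _ => 0, ?_, ?_⟩
    · intro j
      obtain ⟨v, w, hvw⟩ := hadj
      exact ⟨v, w, hvw, Subsingleton.elim _ _⟩
    · intro _ _ _ _ _ _; exact Subsingleton.elim _ _
  -- every k in S divides 2
  have hdvd : ∀ k ∈ S, k ∣ 2 := by
    rintro k ⟨hk, c, hcol⟩
    haveI : NeZero k := ⟨hk.ne'⟩
    have key : ∀ v w, G.Adj v w → c w v = c v w + 1 := by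
      intro v w hvw
      have hmem : v ∈ G.neighborFinset w := (G.mem_neighborFinset w v).mpr hvw.symm
      have hcard : 1 < ((G.neighborFinset w).erase v).card := by
        rw [Finset.card_erase_of_mem hmem, SimpleGraph.card_neighborFinset_eq_degree, hreg w]
        omega
      obtain ⟨z1, hz1, z2, hz2, hne12⟩ := Finset.one_lt_card.mp hcard
      have hz1v : z1 ≠ v := Finset.ne_of_mem_erase hz1
      have hz2v : z2 ≠ v := Finset.ne_of_mem_erase hz2
      have hwz1 : G.Adj w z1 := (G.mem_neighborFinset w z1).mp (Finset.mem_of_mem_erase hz1)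
      have hwz2 : G.Adj w z2 := (G.mem_neighborFinset w z2).mp (Finset.mem_of_mem_erase hz2)
      have h2 : c w z2 = c v w + 1 := hcol.2 v w z2 hvw hwz2 hz2v
      have h3 : c w z2 = c z1 w + 1 := hcol.2 z1 w z2 hwz1.symm hwz2 hne12.symm
      have h4 : c w v = c z1 w + 1 := hcol.2 z1 w v hwz1.symm hvw.symm hz1v.symm
      have : c z1 w = c v w := by
        have := h3.symm.trans h2
        exact add_right_cancel this
      rw [h4, this]
    obtain ⟨v, w, hvw⟩ := hadj
    have e1 := key v w hvw
    have e2 := key w v hvw.symm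
    have : c v w = c v w + 1 + 1 := by rw [← e1, ← e2]
    have h20 : ((2 : ℕ) : ZMod k) = 0 := by
      have h : c v w + (1 + 1) = c v w + 0 := by
        rw [add_zero, ← add_assoc, ← this]
      have h' : (1 : ZMod k) + 1 = 0 := add_left_cancel h
      calc ((2 : ℕ) : ZMod k) = 1 + 1 := by push_cast; ring
        _ = 0 := h'
    exact (ZMod.natCast_eq_zero_iff 2 k).mp h20
  have hbdd : BddAbove S := ⟨2, fun k hk => Nat.le_of_dvd two_pos (hdvd k hk)⟩
  have hmem : sSup S ∈ S := Nat.sSup_mem ⟨1, h1⟩ hbdd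
  have := hdvd _ hmem
  have hpos : 0 < sSup S := hmem.1
  unfold chiO
  exact (Nat.Prime.eq_one_or_self_of_dvd Nat.prime_two _ this).imp id id
end

section
/- If G is a connected simple graph which is not an extended star graph, then χᵒ(G) is even if and only if the vertex chromatic number χ(G) equals 2 (i.e., G is bipartite). -/
/-!
Every circular colouring advances by one along a non-backtracking step of a walk, and also along
a backtracking step through a vertex of degree at least 3; call an infinite walk made of such
steps forced. Along a forced walk a circular `k`-colouring takes every value, and if the walk is
periodic with period `L` then `k ∣ L`.

If `G` is not bipartite, a shortest odd closed walk never backtracks, so `χᵒ(G)` is odd.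
If `G` is bipartite and `k = χᵒ(G)` were odd, pairing a circular `k`-colouring with a proper
2-colouring by the Chinese remainder theorem gives a circular `2k`-colouring, surjective as soon
as `G` has a forced walk: around a cycle, or back and forth between two vertices of degree at
least 3. Otherwise `G` is a tree of maximum degree 2, since extended stars are excluded; so `G`
is a path on `n` vertices, and `χᵒ(G) = 2(n - 1)`, the number of darts.
-/


open SimpleGraph Function

def IsCircularStep {V : Type*} (G : SimpleGraph V) {k : ℕ} (c : V → V → ZMod k) : Prop :=
  ∀ v w z, G.Adj v w → G.Adj w z → z ≠ v → c w z = c v w + 1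

def IsForcedTurn {V : Type*} [Fintype V] (G : SimpleGraph V) [DecidableRel G.Adj]
    (v w z : V) : Prop :=
  z ≠ v ∨ 3 ≤ G.degree w

def IsForcedTour {V : Type*} [Fintype V] (G : SimpleGraph V) [DecidableRel G.Adj]
    (x : ℕ → V) : Prop :=
  ∀ i, G.Adj (x i) (x (i + 1)) ∧ IsForcedTurn G (x i) (x (i + 1)) (x (i + 2))

section CircularColoring

variable {V : Type*} {G : SimpleGraph V}

lemma IsCircularStep.chineseRemainder {m n : ℕ} (hmn : m.Coprime n) {a : V → V → ZMod m}
    {b : V → V → ZMod n} (ha : IsCircularStep G a) (hb : IsCircularStep G b) :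
    IsCircularStep G fun v w ↦ (ZMod.chineseRemainder hmn).symm (a v w, b v w) := by
  intro v w z hvw hwz hzv
  simp only [ha v w z hvw hwz hzv, hb v w z hvw hwz hzv]
  rw [← map_one (ZMod.chineseRemainder hmn).symm, ← map_add]
  rfl

lemma SimpleGraph.Colorable.exists_isCircularStep_zmod_two (h : G.Colorable 2) :
    ∃ s : V → V → ZMod 2, IsCircularStep G s := by
  obtain ⟨C⟩ := h
  refine ⟨fun v _ ↦ C v, fun v w _ hvw _ _ ↦ ?_⟩
  have key : ∀ a b : ZMod 2, a ≠ b → b = a + 1 := by decide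
  exact key _ _ (C.valid hvw)

lemma circularlyPartite_one {v w : V} (hvw : G.Adj v w) : CircularlyPartite G 1 :=
  ⟨one_pos, fun _ _ ↦ 0, fun _ ↦ ⟨v, w, hvw, Subsingleton.elim _ _⟩,
    fun _ _ _ _ _ _ ↦ Subsingleton.elim _ _⟩

lemma CircularlyPartite.of_iso {W : Type*} {H : SimpleGraph W} (e : G ≃g H) {k : ℕ}
    (h : CircularlyPartite H k) : CircularlyPartite G k := by
  obtain ⟨hk, c, hsurj, hc⟩ := h
  refine ⟨hk, fun v w ↦ c (e v) (e w), fun j ↦ ?_, fun v w z hvw hwz hzv ↦ ?_⟩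
  · obtain ⟨v, w, hvw, rfl⟩ := hsurj j
    exact ⟨e.symm v, e.symm w, e.symm.map_adj_iff.mpr hvw, by simp⟩
  · exact hc _ _ _ (e.map_adj_iff.mpr hvw) (e.map_adj_iff.mpr hwz) (e.injective.ne hzv)

variable [Fintype V] [DecidableRel G.Adj]

lemma CircularlyPartite.le_card_dart {k : ℕ} (h : CircularlyPartite G k) :
    k ≤ Fintype.card G.Dart := by
  obtain ⟨hk, c, hsurj, -⟩ := h
  have : NeZero k := ⟨hk.ne'⟩
  have hd : Surjective fun d : G.Dart ↦ c d.fst d.snd := fun j ↦ by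
    obtain ⟨v, w, hvw, rfl⟩ := hsurj j
    exact ⟨⟨(v, w), hvw⟩, rfl⟩
  simpa using Fintype.card_le_of_surjective _ hd

lemma bddAbove_setOf_circularlyPartite : BddAbove {k | CircularlyPartite G k} :=
  ⟨_, fun _ hk ↦ CircularlyPartite.le_card_dart hk⟩

lemma CircularlyPartite.le_chiO {k : ℕ} (h : CircularlyPartite G k) : k ≤ chiO G :=
  le_csSup bddAbove_setOf_circularlyPartite h

lemma circularlyPartite_chiO {v w : V} (hvw : G.Adj v w) : CircularlyPartite G (chiO G) :=
  Nat.sSup_mem ⟨1, circularlyPartite_one hvw⟩ bddAbove_setOf_circularlyPartite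

lemma chiO_le_card_dart : chiO G ≤ Fintype.card G.Dart :=
  csSup_le' fun _ hk ↦ CircularlyPartite.le_card_dart hk

end CircularColoring

section Walk

variable {V : Type*} {G : SimpleGraph V}

lemma SimpleGraph.Walk.length_ne_one {u : V} (W : G.Walk u u) : W.length ≠ 1 :=
  fun h ↦ (W.adj_of_length_eq_one h).ne rfl

lemma SimpleGraph.Walk.adj_getVert_pred {u v : V} (p : G.Walk u v) {i : ℕ} (hi0 : 0 < i)
    (hi : i ≤ p.length) : G.Adj (p.getVert i) (p.getVert (i - 1)) := by
  simpa [show i - 1 + 1 = i by omega] using (p.adj_getVert_succ (i := i - 1) (by omega)).symm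

lemma SimpleGraph.Walk.getVert_append_reverse {u v : V} (p : G.Walk u v) (i : ℕ) :
    (p.append p.reverse).getVert i = p.getVert (min i (2 * p.length - i)) := by
  rw [getVert_append, getVert_reverse]
  split_ifs with h
  · rw [min_eq_left (by omega)]
  · congr 1
    omega

/-- Take a shortest odd closed walk: cutting out a backtrack, or the two end darts if it
backtracks across its base point, would leave a shorter one. -/
lemma SimpleGraph.Walk.exists_odd_loop_getVert_ne {u : V} (W : G.Walk u u)
    (hW : Odd W.length) :
    ∃ (v : V) (W' : G.Walk v v), Odd W'.length ∧ 3 ≤ W'.length ∧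
      (∀ i, i + 2 ≤ W'.length → W'.getVert (i + 2) ≠ W'.getVert i) ∧
      W'.getVert 1 ≠ W'.getVert (W'.length - 1) := by
  obtain ⟨n, hn⟩ : ∃ n, W.length = n := ⟨_, rfl⟩
  induction n using Nat.strong_induction_on generalizing u W with
  | _ n ih =>
  have h3 : 3 ≤ n := by
    have := W.length_ne_one
    obtain ⟨t, ht⟩ := hW
    omega
  have hshorter : Odd (n - 2) := Nat.odd_iff.mpr (by have := Nat.odd_iff.mp (hn ▸ hW); omega)
  by_cases hback : ∃ i, i + 2 ≤ n ∧ W.getVert (i + 2) = W.getVert i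
  · obtain ⟨i, hi, heq⟩ := hback
    let W' := (W.take i).append ((W.drop (i + 2)).copy heq rfl)
    have hW' : W'.length = n - 2 := by
      simp only [W', length_append, take_length, length_copy, drop_length]
      omega
    exact ih (n - 2) (by omega) W' (hW' ▸ hshorter) hW'
  by_cases hwrap : W.getVert 1 = W.getVert (n - 1)
  · have hend : (W.drop 1).getVert (n - 2) = W.getVert 1 := by
      rw [drop_getVert, hwrap]
      congr 1
      omega
    let W' := ((W.drop 1).take (n - 2)).copy rfl hend
    have hW' : W'.length = n - 2 := by
      simp only [W', length_copy, take_length, drop_length]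
      omega
    exact ih (n - 2) (by omega) W' (hW' ▸ hshorter) hW'
  push Not at hback
  exact ⟨u, W, hW, hn ▸ h3, fun i hi ↦ hback i (hn ▸ hi), hn ▸ hwrap⟩

end Walk

section Degree

variable {V : Type*} [Fintype V] {G : SimpleGraph V} [DecidableRel G.Adj]

lemma exists_adj_ne_ne_of_three_le_degree {w : V} (hw : 3 ≤ G.degree w) (x y : V) :
    ∃ z, G.Adj w z ∧ z ≠ x ∧ z ≠ y := by
  classical
  by_contra! h
  have hsub : G.neighborFinset w ⊆ {x, y} := fun z hz ↦ by
    rw [mem_neighborFinset] at hz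
    by_cases hzx : z = x
    · simp [hzx]
    · simp [h z hz hzx]
  have := (Finset.card_le_card hsub).trans Finset.card_le_two
  rw [card_neighborFinset_eq_degree] at this
  omega

lemma three_le_degree_of_adj {w a b c : V} (ha : G.Adj w a) (hb : G.Adj w b) (hc : G.Adj w c)
    (hab : a ≠ b) (hac : a ≠ c) (hbc : b ≠ c) : 3 ≤ G.degree w := by
  classical
  rw [← card_neighborFinset_eq_degree]
  calc 3 = ({a, b, c} : Finset V).card := by
        rw [Finset.card_insert_of_notMem (by simp [hab, hac]), Finset.card_pair hbc]
    _ ≤ _ := Finset.card_le_card fun x hx ↦ by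
        simp only [Finset.mem_insert, Finset.mem_singleton] at hx
        rcases hx with rfl | rfl | rfl <;> simpa

end Degree

section ForcedTour

variable {V : Type*} [Fintype V] {G : SimpleGraph V} [DecidableRel G.Adj] {k : ℕ}
  {c : V → V → ZMod k}

lemma IsCircularStep.add_one_of_isForcedTurn (hc : IsCircularStep G c) {v w z : V}
    (hvw : G.Adj v w) (hwz : G.Adj w z) (h : IsForcedTurn G v w z) : c w z = c v w + 1 := by
  rcases h with hzv | hw
  · exact hc v w z hvw hwz hzv
  obtain ⟨y, hwy, hyv, -⟩ := exists_adj_ne_ne_of_three_le_degree hw v v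
  obtain ⟨t, hwt, htv, hty⟩ := exists_adj_ne_ne_of_three_le_degree hw v y
  -- Both `(v, w)` and `(y, w)` are followed by `(w, t)`, so they have the same colour.
  have hyw : c y w = c v w := add_right_cancel <|
    (hc y w t hwy.symm hwt hty).symm.trans (hc v w t hvw hwt htv)
  by_cases hzv : z = v
  · subst hzv
    rw [hc y w z hwy.symm hwz (Ne.symm hyv), hyw]
  · exact hc v w z hvw hwz hzv

lemma IsForcedTour.color_eq (hc : IsCircularStep G c) {x : ℕ → V} (hx : IsForcedTour G x)
    (i : ℕ) : c (x i) (x (i + 1)) = c (x 0) (x 1) + i := by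
  induction i with
  | zero => simp
  | succ i ih =>
    rw [hc.add_one_of_isForcedTurn (hx i).1 (hx (i + 1)).1 (hx i).2, ih]
    push_cast
    ring

lemma IsForcedTour.isCircularColoring [NeZero k] (hc : IsCircularStep G c) {x : ℕ → V}
    (hx : IsForcedTour G x) : IsCircularColoring G k c := by
  refine ⟨fun j ↦ ⟨_, _, (hx (j - c (x 0) (x 1)).val).1, ?_⟩, hc⟩
  rw [hx.color_eq hc, ZMod.natCast_zmod_val]
  ring

lemma IsForcedTour.dvd_of_periodic (hc : IsCircularStep G c) {x : ℕ → V}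
    (hx : IsForcedTour G x) {L : ℕ} (hL : Periodic x L) : k ∣ L := by
  have h := hx.color_eq hc L
  have h0 : x L = x 0 := by simpa using hL 0
  have h1 : x (L + 1) = x 1 := by simpa [add_comm] using hL 1
  rw [h0, h1, left_eq_add] at h
  exact (ZMod.natCast_eq_zero_iff L k).mp h

lemma SimpleGraph.Walk.isForcedTour_getVert_mod {u : V} (W : G.Walk u u) (hW : 2 ≤ W.length)
    (hturn : ∀ i, i + 2 ≤ W.length →
      IsForcedTurn G (W.getVert i) (W.getVert (i + 1)) (W.getVert (i + 2)))
    (hwrap : IsForcedTurn G (W.getVert (W.length - 1)) u (W.getVert 1)) :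
    IsForcedTour G fun i ↦ W.getVert (i % W.length) := by
  set L := W.length
  have hmod : ∀ j ≤ L, W.getVert (j % L) = W.getVert j := fun j hj ↦ by
    rcases hj.lt_or_eq with hj | rfl
    · rw [Nat.mod_eq_of_lt hj]
    · rw [Nat.mod_self, W.getVert_zero, W.getVert_length]
  intro i
  have hr : i % L < L := Nat.mod_lt _ (by omega)
  have hsucc : ∀ j, (i + j) % L = (i % L + j) % L := fun j ↦ by simp [Nat.add_mod]
  simp only [hsucc 1, hsucc 2, hmod (i % L + 1) hr]
  refine ⟨W.adj_getVert_succ hr, ?_⟩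
  rcases Nat.lt_or_ge (i % L + 1) L with h | h
  · rw [hmod _ h]
    exact hturn _ h
  · rw [show i % L = L - 1 by omega, show L - 1 + 2 = 1 + L by omega, Nat.add_mod_right,
      Nat.mod_eq_of_lt (by omega), show L - 1 + 1 = L by omega, W.getVert_length]
    exact hwrap

lemma SimpleGraph.Walk.IsCycle.isForcedTour {u : V} {W : G.Walk u u} (hW : W.IsCycle) :
    IsForcedTour G fun i ↦ W.getVert (i % W.length) := by
  have h3 := hW.three_le_length
  refine W.isForcedTour_getVert_mod (by omega) (fun i hi ↦ Or.inl ?_) (Or.inl ?_)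
  · simpa using (hW.getVert_sub_one_ne_getVert_add_one (i := i + 1) (by omega)).symm
  · exact hW.snd_ne_penultimate

lemma exists_isForcedTour_of_three_le_degree (hG : G.Connected) {u₁ u₂ : V} (hne : u₁ ≠ u₂)
    (h₁ : 3 ≤ G.degree u₁) (h₂ : 3 ≤ G.degree u₂) : ∃ x, IsForcedTour G x := by
  obtain ⟨P, hP, -⟩ := hG.exists_path_of_dist u₁ u₂
  have hm : P.length ≠ 0 := fun h ↦ hne (Walk.eq_of_length_eq_zero h)
  -- Walk from `u₁` to `u₂` and back; both turning points are branch vertices.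
  let W := P.append P.reverse
  have hW : W.length = 2 * P.length := by
    simp only [W, Walk.length_append, Walk.length_reverse]
    ring
  refine ⟨_, W.isForcedTour_getVert_mod (by omega) (fun i hi ↦ ?_) (Or.inr h₁)⟩
  simp only [W, Walk.getVert_append_reverse]
  rw [hW] at hi
  by_cases him : i + 1 = P.length
  · right
    rwa [show min (i + 1) (2 * P.length - (i + 1)) = P.length by omega, P.getVert_length]
  · left
    intro h
    have := hP.getVert_injOn (by simp only [Set.mem_ofPred_eq]; omega)
      (by simp only [Set.mem_ofPred_eq]; omega) h
    omega

lemma exists_isForcedTour_or_isTree (hG : G.Connected) (hstar : ¬IsExtendedStar G) :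
    (∃ x, IsForcedTour G x) ∨ (G.IsTree ∧ ∀ v, G.degree v ≤ 2) := by
  by_cases hcyc : G.IsAcyclic
  · by_cases hbr : ∃ u₁ u₂, u₁ ≠ u₂ ∧ 3 ≤ G.degree u₁ ∧ 3 ≤ G.degree u₂
    · obtain ⟨u₁, u₂, hne, h₁, h₂⟩ := hbr
      exact Or.inl (exists_isForcedTour_of_three_le_degree hG hne h₁ h₂)
    · refine Or.inr ⟨⟨hG, hcyc⟩, fun v ↦ ?_⟩
      by_contra! hv
      exact hstar ⟨⟨hG, hcyc⟩, v, hv, fun u hu ↦ by_contra fun hne ↦ hbr ⟨u, v, hne, hu, hv⟩⟩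
  · obtain ⟨u, W, hW⟩ : ∃ u, ∃ W : G.Walk u u, W.IsCycle := by simpa [IsAcyclic] using hcyc
    exact Or.inl ⟨_, hW.isForcedTour⟩

lemma CircularlyPartite.odd_of_not_colorable_two (hk : CircularlyPartite G k)
    (hG : ¬G.Colorable 2) : Odd k := by
  obtain ⟨u, W, hW⟩ : ∃ u, ∃ W : G.Walk u u, Odd W.length := by
    simpa [two_colorable_iff_forall_loop_even] using hG
  obtain ⟨v, W', hodd, h3, hturn, hwrap⟩ := W.exists_odd_loop_getVert_ne hW
  have hx := W'.isForcedTour_getVert_mod (by omega) (fun i hi ↦ Or.inl (hturn i hi))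
    (Or.inl hwrap)
  obtain ⟨-, c, -, hc⟩ := hk
  exact hodd.of_dvd_nat (hx.dvd_of_periodic hc fun i ↦ by simp)

lemma CircularlyPartite.two_mul (hk : CircularlyPartite G k) (hodd : Odd k)
    (hG : G.Colorable 2) {x : ℕ → V} (hx : IsForcedTour G x) : CircularlyPartite G (2 * k) := by
  obtain ⟨hk0, c, -, hc⟩ := hk
  obtain ⟨s, hs⟩ := hG.exists_isCircularStep_zmod_two
  have : NeZero (2 * k) := ⟨by omega⟩
  exact ⟨by omega, _,
    hx.isCircularColoring (hs.chineseRemainder (Nat.coprime_two_left.mpr hodd) hc)⟩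

end ForcedTour

/-- Darts pointing away from `0` get the colours `0, …, n - 2` and darts pointing towards `0`
get `n - 1, …, 2n - 3`, the larger the closer to `0`. -/
lemma circularlyPartite_pathGraph {n : ℕ} (hn : 2 ≤ n) :
    CircularlyPartite (pathGraph n) (2 * (n - 1)) := by
  set N := 2 * (n - 1)
  have : NeZero N := ⟨by omega⟩
  refine ⟨by omega, fun i j ↦ if (i : ℕ) + 1 = j then (i : ZMod N) else -(j : ZMod N) - 1,
    fun t ↦ ?_, fun i j l hij hjl hli ↦ ?_⟩
  · have ht : t.val < N := ZMod.val_lt t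
    by_cases htn : t.val < n - 1
    · refine ⟨⟨t.val, by omega⟩, ⟨t.val + 1, by omega⟩, by simp [pathGraph_adj], ?_⟩
      simp
    · refine ⟨⟨N - t.val, by omega⟩, ⟨N - 1 - t.val, by omega⟩, by simp [pathGraph_adj]; omega,
        ?_⟩
      simp only [if_neg (show ¬(N - t.val + 1 = N - 1 - t.val) by omega)]
      rw [Nat.cast_sub (by omega), Nat.cast_sub (by omega), ZMod.natCast_self,
        ZMod.natCast_zmod_val]
      ring
  · rw [pathGraph_adj] at hij hjl
    have hli' : (l : ℕ) ≠ i := fun h ↦ hli (Fin.ext h)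
    dsimp only
    rcases hij with hij | hij <;> rcases hjl with hjl | hjl
    · rw [if_pos hij, if_pos hjl, ← hij]
      push_cast
      ring
    · omega
    · omega
    · rw [if_neg (by omega), if_neg (by omega), ← hjl]
      push_cast
      ring

section MaxDegreeTwo

variable {V : Type*} [Fintype V] {G : SimpleGraph V} [DecidableRel G.Adj]

lemma SimpleGraph.Walk.IsPath.mem_support_of_forall_length_le (hG : G.Connected)
    (hdeg : ∀ v, G.degree v ≤ 2) {a b : V} {P : G.Walk a b} (hP : P.IsPath)
    (hmax : ∀ (u v : V) (Q : G.Walk u v), Q.IsPath → Q.length ≤ P.length) (x : V) :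
    x ∈ P.support := by
  by_contra hx
  obtain ⟨Q⟩ := hG.preconnected a x
  obtain ⟨d, -, hd, hd'⟩ := Q.exists_boundary_dart {v | v ∈ P.support} P.start_mem_support hx
  obtain ⟨i, hi, hiL⟩ := mem_support_iff_exists_getVert.mp hd
  have hadj : G.Adj (P.getVert i) d.snd := hi ▸ d.adj
  rcases Nat.eq_zero_or_pos i with rfl | hi0
  · rw [getVert_zero] at hadj
    have := hmax _ _ _ ((cons_isPath_iff hadj.symm P).mpr ⟨hP, hd'⟩)
    simp at this
  rcases hiL.eq_or_lt with rfl | hiL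
  · rw [getVert_length] at hadj
    have := hmax _ _ _ (hP.concat hd' hadj)
    simp at this
  have hne : P.getVert (i - 1) ≠ P.getVert (i + 1) := fun h ↦ by
    have := hP.getVert_injOn (by simp only [Set.mem_ofPred_eq]; omega)
      (by simp only [Set.mem_ofPred_eq]; omega) h
    omega
  have := three_le_degree_of_adj (P.adj_getVert_pred hi0 hiL.le) (P.adj_getVert_succ hiL) hadj
    hne (fun h ↦ hd' (h ▸ P.getVert_mem_support _)) (fun h ↦ hd' (h ▸ P.getVert_mem_support _))
  have := hdeg (P.getVert i)
  omega

lemma SimpleGraph.Walk.IsPath.adj_getVert_iff (hT : G.IsAcyclic) (hdeg : ∀ v, G.degree v ≤ 2)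
    {a b : V} {P : G.Walk a b} (hP : P.IsPath) {i j : ℕ} (hi : i ≤ P.length)
    (hj : j ≤ P.length) : G.Adj (P.getVert i) (P.getVert j) ↔ i + 1 = j ∨ j + 1 = i := by
  have hinj : ∀ {i j}, i ≤ P.length → j ≤ P.length → P.getVert i = P.getVert j → i = j :=
    fun hi hj h ↦ hP.getVert_injOn (by simpa using hi) (by simpa using hj) h
  refine ⟨fun h ↦ ?_, ?_⟩
  · rcases Nat.eq_zero_or_pos i with rfl | hi0
    · rw [getVert_zero] at h
      have hj0 : j ≠ 0 := by rintro rfl; exact h.ne P.getVert_zero.symm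
      have := hinj hj (by omega) (hT.eq_snd_of_adj_start hP h (P.getVert_mem_support j))
      omega
    rcases hi.eq_or_lt with rfl | hiL
    · rw [getVert_length] at h
      have := hinj hj (by omega) (hT.eq_penultimate_of_adj_end hP h (P.getVert_mem_support j))
      omega
    by_contra hij
    have := three_le_degree_of_adj (P.adj_getVert_pred hi0 hi) (P.adj_getVert_succ hiL) h
      (fun h ↦ by have := hinj (by omega) (by omega) h; omega)
      (fun h ↦ by have := hinj (by omega) hj h; omega)
      (fun h ↦ by have := hinj (by omega) hj h; omega)
    have := hdeg (P.getVert i)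
    omega
  · rintro (rfl | rfl)
    · exact P.adj_getVert_succ (by omega)
    · exact (P.adj_getVert_succ (by omega)).symm

lemma SimpleGraph.IsTree.isPathGraph (hT : G.IsTree) (hdeg : ∀ v, G.degree v ≤ 2) :
    IsPathGraph G := by
  have : Nonempty V := hT.1.nonempty
  obtain ⟨a, b, P, hP, hmax⟩ := Walk.exists_isPath_forall_isPath_length_le_length G
  let f : Fin (P.length + 1) → V := fun i ↦ P.getVert i
  have hf : Bijective f := by
    refine ⟨fun i j h ↦ Fin.ext (hP.getVert_injOn (by simpa using i.is_le)
      (by simpa using j.is_le) h), fun x ↦ ?_⟩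
    obtain ⟨i, hi, hiL⟩ :=
      Walk.mem_support_iff_exists_getVert.mp (hP.mem_support_of_forall_length_le hT.1 hdeg hmax x)
    exact ⟨⟨i, by omega⟩, hi⟩
  refine ⟨P.length + 1, ⟨(⟨Equiv.ofBijective f hf, ?_⟩ : pathGraph _ ≃g G).symm⟩⟩
  intro i j
  simp only [Equiv.ofBijective_apply, f, pathGraph_adj]
  exact hP.adj_getVert_iff hT.2 hdeg i.is_le j.is_le

lemma SimpleGraph.IsTree.chiO_eq [Nontrivial V] (hT : G.IsTree) (hdeg : ∀ v, G.degree v ≤ 2) :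
    chiO G = 2 * (Fintype.card V - 1) := by
  obtain ⟨n, ⟨e⟩⟩ := hT.isPathGraph hdeg
  have hn : Fintype.card V = n := by simpa using Fintype.card_congr e.toEquiv
  have := Fintype.one_lt_card (α := V)
  refine le_antisymm ?_ ?_
  · calc chiO G ≤ Fintype.card G.Dart := chiO_le_card_dart
      _ = 2 * (Fintype.card V - 1) := by
        rw [dart_card_eq_twice_card_edges, ← hT.card_edgeFinset]
        simp
  · rw [hn]
    exact ((circularlyPartite_pathGraph (by omega)).of_iso e).le_chiO

end MaxDegreeTwo

/-- if `G` is connected with at least one edge and not an extended star,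
then `χᵒ(G)` is even iff `χ(G) = 2`. -/
theorem stmt_9 {V : Type*} [Fintype V] (G : SimpleGraph V) [DecidableRel G.Adj]
    (hG : G.Connected) (he : G.edgeSet.Nonempty) (hstar : ¬ IsExtendedStar G) :
    Even (chiO G) ↔ G.chromaticNumber = 2 := by
  have hbot : G ≠ ⊥ := edgeSet_nonempty.mp he
  obtain ⟨v, w, hvw⟩ := ne_bot_iff_exists_adj.mp hbot
  have hk := circularlyPartite_chiO hvw
  rw [chromaticNumber_eq_two_iff, and_iff_left hbot]
  constructor
  · intro heven
    by_contra hbip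
    exact Nat.not_odd_iff_even.mpr heven (hk.odd_of_not_colorable_two hbip)
  · intro hbip
    by_contra hodd
    rcases exists_isForcedTour_or_isTree hG hstar with ⟨x, hx⟩ | ⟨hT, hdeg⟩
    · have := (hk.two_mul (Nat.not_even_iff_odd.mp hodd) hbip hx).le_chiO
      have := hk.1
      omega
    · have : Nontrivial V := ⟨v, w, hvw.ne⟩
      exact hodd (hT.chiO_eq hdeg ▸ even_two_mul _)
end

section
/- If a connected simple graph G contains a cycle of length ℓ, then for all t ∈ {1,…,ℓ}, χ_t(G) ≤ gcd(t, ℓ). -/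
/-!
Number the vertices of the cycle `C` by `ℕ`, periodically modulo `ℓ`. For `t < ℓ` the arc of `C`
from position `n` to position `n + t` is a path of length `t`, so along `C` the colour is periodic
with periods `t` and `ℓ`, hence with period `gcd t ℓ`: the cycle carries at most `gcd t ℓ` colours.
Every other vertex `x` has the colour of a vertex of `C`: take a path from `x` to `C` meeting `C`
only at its end, of length `d`. If `d ≥ t`, cutting off its first `t` edges keeps the colour of the
start; if `0 < d < t`, continuing it along `C` for `t - d` more steps gives a path of length `t`.
-/

open SimpleGraph Function

theorem Function.Periodic.nat_sub_period {α : Type*} {f : ℕ → α} {a b : ℕ} (hb : Periodic f b)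
    (ha : Periodic f a) (hab : a ≤ b) : Periodic f (b - a) := fun n => by
  rw [← ha, add_assoc, Nat.sub_add_cancel hab, hb]

theorem Function.Periodic.nat_gcd {α : Type*} {f : ℕ → α} {a b : ℕ} (ha : Periodic f a)
    (hb : Periodic f b) : Periodic f (a.gcd b) := by
  induction a, b using Nat.gcd.induction with
  | H0 b => simpa using hb
  | H1 a b _ ih =>
    rw [Nat.gcd_rec]
    refine ih ?_ ha
    rw [Nat.mod_eq_sub_div_mul]
    have hmul : Periodic f (b / a * a) := by simpa using ha.nat_mul (b / a)
    exact hb.nat_sub_period hmul (Nat.div_mul_le_self b a)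

namespace SimpleGraph

variable {V : Type*} {G : SimpleGraph V}

theorem Reachable.exists_isPath_meeting_set_only_at_end {S : Set V} {x w : V}
    (h : G.Reachable x w) (hw : w ∈ S) :
    ∃ y ∈ S, ∃ q : G.Walk x y, q.IsPath ∧ ∀ z ∈ q.support, z ∈ S → z = y := by
  classical
  obtain ⟨r⟩ := h
  induction r with
  | nil => exact ⟨_, hw, .nil, .nil, by simp⟩
  | @cons a _ _ hadj _ ih =>
    obtain ⟨y, hy, q, hq, hqS⟩ := ih hw
    by_cases ha : a ∈ S
    · exact ⟨a, ha, .nil, .nil, by simp⟩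
    by_cases hmem : a ∈ q.support
    · exact ⟨y, hy, q.dropUntil a hmem, hq.dropUntil hmem,
        fun z hz => hqS z (q.support_dropUntil_subset_support hmem hz)⟩
    · refine ⟨y, hy, .cons hadj q, hq.cons hmem, fun z hz hzS => ?_⟩
      rcases List.mem_cons.mp hz with rfl | hz
      · exact absurd hzS ha
      · exact hqS z hz hzS

namespace Walk

variable {u v w : V}

theorem IsPath.append {p : G.Walk u v} {q : G.Walk v w} (hp : p.IsPath)
    (hq : q.IsPath) (h : ∀ z ∈ p.support, z ∈ q.support → z = v) : (p.append q).IsPath := by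
  have hq' := hq.support_nodup
  rw [← cons_tail_support] at hq'
  rw [isPath_def, support_append, List.nodup_append]
  refine ⟨hp.support_nodup, hq'.of_cons, fun z hzp z' hzq hzz => ?_⟩
  subst hzz
  rw [h z hzp (List.mem_of_mem_tail hzq)] at hzq
  exact (List.nodup_cons.mp hq').1 hzq

def cycleVert (p : G.Walk u u) (n : ℕ) : V := p.getVert (n % p.length)

variable {p : G.Walk u u}

theorem periodic_cycleVert (p : G.Walk u u) : Periodic p.cycleVert p.length := fun n => by
  simp [cycleVert]

theorem cycleVert_mod_add (p : G.Walk u u) (i r : ℕ) :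
    p.cycleVert (i % p.length + r) = p.cycleVert (i + r) := by
  simp [cycleVert, Nat.mod_add_mod]

theorem getVert_append_self (p : G.Walk u u) {n : ℕ} (hn : n < 2 * p.length) :
    (p.append p).getVert n = p.cycleVert n := by
  rw [getVert_append, cycleVert]
  split_ifs with h
  · rw [Nat.mod_eq_of_lt h]
  · rw [Nat.mod_eq_sub_mod (not_lt.1 h), Nat.mod_eq_of_lt (by omega)]

theorem IsCycle.cycleVert_eq_cycleVert_iff (hp : p.IsCycle) {a b : ℕ} :
    p.cycleVert a = p.cycleVert b ↔ a % p.length = b % p.length := by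
  have hpos : 0 < p.length := by have := hp.three_le_length; omega
  refine ⟨fun h => hp.getVert_injOn' ?_ ?_ h, fun h => by rw [cycleVert, cycleVert, h]⟩
  · have := Nat.mod_lt a hpos
    simp only [Set.mem_ofPred_eq]; omega
  · have := Nat.mod_lt b hpos
    simp only [Set.mem_ofPred_eq]; omega

theorem IsCycle.exists_isPath_cycleVert (hp : p.IsCycle) (i : ℕ) {m : ℕ} (hm : m < p.length) :
    ∃ q : G.Walk (p.cycleVert i) (p.cycleVert (i + m)), q.IsPath ∧ q.length = m ∧
      ∀ r ≤ m, q.getVert r = p.cycleVert (i + r) := by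
  have hk : i % p.length < p.length := Nat.mod_lt _ (by have := hp.three_le_length; omega)
  let q := ((p.append p).drop (i % p.length)).take m
  have hlen : q.length = m := by simp [q]; omega
  have hvert : ∀ r ≤ m, q.getVert r = p.cycleVert (i + r) := fun r hr => by
    rw [take_getVert, drop_getVert, min_eq_right hr, getVert_append_self _ (by omega),
      cycleVert_mod_add]
  have hstart : (p.append p).getVert (i % p.length) = p.cycleVert i := by
    rw [getVert_append_self _ (by omega), ← add_zero (i % p.length), cycleVert_mod_add, add_zero]
  have hend : ((p.append p).drop (i % p.length)).getVert m = p.cycleVert (i + m) := by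
    rw [drop_getVert, getVert_append_self _ (by omega), cycleVert_mod_add]
  refine ⟨q.copy hstart hend, ?_, by simpa using hlen, fun r hr => by simpa using hvert r hr⟩
  rw [isPath_copy, ← IsPath.getVert_injOn_iff]
  intro r hr r' hr' h
  simp only [Set.mem_ofPred_eq, hlen] at hr hr'
  rw [hvert r hr, hvert r' hr', hp.cycleVert_eq_cycleVert_iff] at h
  have := Nat.ModEq.add_left_cancel' i h
  rwa [Nat.ModEq, Nat.mod_eq_of_lt (by omega), Nat.mod_eq_of_lt (by omega)] at this

section PeriodicColoring

variable {α : Type*} {c : V → α} {t : ℕ}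

theorem IsCycle.periodic_comp_cycleVert (hp : p.IsCycle) (hc : IsPeriodicColoring G t c)
    (ht : t ≤ p.length) : Periodic (c ∘ p.cycleVert) t := by
  rcases ht.eq_or_lt with rfl | ht
  · exact fun n => congrArg c (p.periodic_cycleVert n)
  · intro n
    obtain ⟨q, hq, hlen, -⟩ := hp.exists_isPath_cycleVert n ht
    exact (hc _ _ q hq hlen).symm

theorem IsCycle.exists_color_eq_cycleVert_of_isPath (hp : p.IsCycle)
    (hc : IsPeriodicColoring G t c) (ht₀ : 0 < t) (ht : t ≤ p.length) {x : V} {j : ℕ}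
    (q : G.Walk x (p.cycleVert j)) (hq : q.IsPath)
    (hqS : ∀ z ∈ q.support, z ∈ Set.range p.cycleVert → z = p.cycleVert j) :
    ∃ i, c x = c (p.cycleVert i) := by
  induction hd : q.length using Nat.strong_induction_on generalizing x with
  | _ d ih =>
    rcases Nat.eq_zero_or_pos d with rfl | hd₀
    · exact ⟨j, by rw [q.eq_of_length_eq_zero hd]⟩
    rcases lt_or_ge d t with hdt | htd
    · obtain ⟨a, ha, hlen, hvert⟩ := hp.exists_isPath_cycleVert j (m := t - d) (by omega)
      refine ⟨j + (t - d), hc _ _ (q.append a) (hq.append ha ?_) ?_⟩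
      · intro z hzq hza
        obtain ⟨r, rfl, hr⟩ := mem_support_iff_exists_getVert.mp hza
        exact hqS _ hzq ⟨j + r, (hvert r (hlen ▸ hr)).symm⟩
      · rw [length_append, hd, hlen]; omega
    · have hxt : c x = c (q.getVert t) := hc _ _ (q.take t) (hq.take t) (by simp; omega)
      obtain ⟨i, hi⟩ := ih (d - t) (by omega) (q.drop t) (hq.drop t)
        (fun z hz => hqS z ((q.isSubwalk_drop t).support_subset hz)) (by simp [hd])
      exact ⟨i, hxt.trans hi⟩

theorem IsCycle.exists_color_eq_cycleVert (hp : p.IsCycle) (hG : G.Connected)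
    (hc : IsPeriodicColoring G t c) (ht₀ : 0 < t) (ht : t ≤ p.length) (x : V) :
    ∃ i, c x = c (p.cycleVert i) := by
  obtain ⟨y, ⟨j, rfl⟩, q, hq, hqS⟩ :=
    (hG.preconnected x (p.cycleVert 0)).exists_isPath_meeting_set_only_at_end
      (Set.mem_range_self 0)
  exact hp.exists_color_eq_cycleVert_of_isPath hc ht₀ ht q hq hqS

end PeriodicColoring

end Walk

end SimpleGraph

theorem stmt_15_general {V : Type*} (G : SimpleGraph V) (hG : G.Connected)
    (ℓ : ℕ) (hcyc : ∃ (u : V) (p : G.Walk u u), p.IsCycle ∧ p.length = ℓ) :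
    ∀ t, 1 ≤ t → t ≤ ℓ → chiT G t ≤ Nat.gcd t ℓ := by
  intro t ht₀ ht
  obtain ⟨u, p, hp, rfl⟩ := hcyc
  refine csSup_le' fun k ⟨c, hc_surj, hc⟩ => ?_
  have hperiod : Periodic (c ∘ p.cycleVert) (t.gcd p.length) :=
    (hp.periodic_comp_cycleVert hc ht).nat_gcd (p.periodic_cycleVert.comp c)
  have hsurj : Surjective fun i : Fin (t.gcd p.length) => c (p.cycleVert i) := fun col => by
    obtain ⟨x, rfl⟩ := hc_surj col
    obtain ⟨i, hi⟩ := hp.exists_color_eq_cycleVert hG hc ht₀ ht x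
    exact ⟨⟨i % t.gcd p.length, Nat.mod_lt _ (Nat.gcd_pos_of_pos_left _ ht₀)⟩,
      (hperiod.map_mod_nat i).trans hi.symm⟩
  simpa using Fintype.card_le_of_surjective _ hsurj

/-- if `G` has a cycle of length `ℓ`, then `χ_t(G) ≤ gcd(t, ℓ)` for
all `t ∈ {1, …, ℓ}`. -/
theorem stmt_15 {V : Type*} [Fintype V] (G : SimpleGraph V) (hG : G.Connected)
    (ℓ : ℕ) (hcyc : ∃ (u : V) (p : G.Walk u u), p.IsCycle ∧ p.length = ℓ) :
    ∀ t, 1 ≤ t → t ≤ ℓ → chiT G t ≤ Nat.gcd t ℓ :=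
  stmt_15_general G hG ℓ hcyc
end

section
/- If G is the cycle graph on N vertices and t ∈ {1,…,N}, then χ_t(G) = t if and only if G is circularly t-partite, which holds if and only if t divides N. -/
open SimpleGraph Function

/-! A path in `C_N` never turns back, so a path of length `t` from `u` ends at `u ± t`. Hence a
`t`-periodic vertex colouring is invariant under rotation by `t`, and trivially by `N`, so by
`gcd(t, N)`; conversely `v ↦ v mod gcd(t, N)` is `t`-periodic. Thus `χ_t(C_N) = gcd(t, N)` for
`t ≤ N`, and this equals `t` iff `t ∣ N`.

Along the forward edges `(m, m + 1)` a circular `t`-colouring increases by one, and going once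
around the cycle forces `N ≡ 0 (mod t)`; when `t ∣ N`, colouring `(v, v ± 1)` by `±(v mod t)` works. -/

namespace Function.Periodic

variable {α : Type*} {f : ℤ → α}

theorem int_gcd {a b : ℤ} (ha : Periodic f a) (hb : Periodic f b) : Periodic f (Int.gcd a b) := by
  rw [Int.gcd_eq_gcd_ab, mul_comm a, mul_comm b]
  exact (ha.int_mul _).add_period (hb.int_mul _)

theorem card_le_of_surjective [Fintype α] {g : ℕ} (hf : Periodic f g) (hg : 0 < g)
    (hs : Surjective f) : Fintype.card α ≤ g := by
  have hg' : (0 : ℤ) < g := by exact_mod_cast hg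
  have hres : Surjective fun r : Fin g => f r := fun y => by
    obtain ⟨z, rfl⟩ := hs y
    refine ⟨⟨(z % g).toNat, by have := Int.emod_lt_of_pos z hg'; omega⟩, ?_⟩
    dsimp only
    rw [Int.toNat_of_nonneg (Int.emod_nonneg z hg'.ne'), Int.emod_def, mul_comm]
    exact hf.sub_int_mul_eq _
  simpa using Fintype.card_le_of_surjective _ hres

end Function.Periodic

theorem Fin.natCast_val_add {g N : ℕ} (h : g ∣ N) (a b : Fin N) :
    (((a + b).val : ℕ) : ZMod g) = a.val + b.val := by
  rw [Fin.val_add, ← ZMod.natCast_mod, Nat.mod_mod_of_dvd _ h, ZMod.natCast_mod, Nat.cast_add]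

open scoped Fin.CommRing Fin.NatCast Fin.IntCast

theorem Fin.sub_one_ne_add_one {n : ℕ} (v : Fin (n + 3)) : v - 1 ≠ v + 1 := by
  rw [Ne, sub_eq_iff_eq_add, add_assoc, left_eq_add, one_add_one_eq_two, Fin.ext_iff]
  simp [Nat.mod_eq_of_lt (show 2 < n + 3 by omega)]

namespace SimpleGraph

variable {n : ℕ}

theorem cycleGraph_adj_iff_eq_add_or_eq_sub {u v : Fin (n + 2)} :
    (cycleGraph (n + 2)).Adj u v ↔ v = u + 1 ∨ v = u - 1 := by
  rw [← mem_neighborSet, cycleGraph_neighborSet, Set.mem_insert_iff, Set.mem_singleton_iff, or_comm]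

theorem cycleGraph_adj_add_one (v : Fin (n + 2)) : (cycleGraph (n + 2)).Adj v (v + 1) :=
  cycleGraph_adj_iff_eq_add_or_eq_sub.mpr (.inl rfl)

def cycleGraph.forwardWalk (u : Fin (n + 2)) : (L : ℕ) → (cycleGraph (n + 2)).Walk u (u + L)
  | 0 => Walk.nil.copy rfl (by simp)
  | L + 1 => (Walk.cons (cycleGraph_adj_add_one u) (forwardWalk (u + 1) L)).copy rfl
      (by push_cast; ring)

theorem cycleGraph.length_forwardWalk (u : Fin (n + 2)) (L : ℕ) :
    (forwardWalk u L).length = L := by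
  induction L generalizing u with
  | zero => simp [forwardWalk]
  | succ L ih => simp [forwardWalk, ih]

theorem cycleGraph.support_forwardWalk (u : Fin (n + 2)) (L : ℕ) :
    (forwardWalk u L).support = (List.range (L + 1)).map fun i : ℕ => u + i := by
  induction L generalizing u with
  | zero => simp [forwardWalk]
  | succ L ih =>
    rw [forwardWalk, Walk.support_copy, Walk.support_cons, ih, List.range_succ_eq_map (n := L + 1),
      List.map_cons, List.map_map]
    congr 1
    · simp
    · refine List.map_congr_left fun i _ => ?_
      simp only [comp_apply]
      push_cast
      ring

theorem cycleGraph.isPath_forwardWalk (u : Fin (n + 2)) {L : ℕ} (hL : L < n + 2) :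
    (forwardWalk u L).IsPath := by
  rw [Walk.isPath_def, support_forwardWalk]
  refine List.nodup_range.map_on fun i hi j hj hij => ?_
  rw [List.mem_range] at hi hj
  simpa [Fin.ext_iff, Nat.mod_eq_of_lt (hi.trans_le hL), Nat.mod_eq_of_lt (hj.trans_le hL)]
    using hij

-- The steps `getVert (i + 1) - getVert i = ±1` of a path never reverse, so they are all equal.
theorem cycleGraph.eq_add_length_or_eq_sub_length {u v : Fin (n + 2)}
    {p : (cycleGraph (n + 2)).Walk u v} (hp : p.IsPath) :
    v = u + p.length ∨ v = u - p.length := by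
  rcases Nat.eq_zero_or_pos p.length with h0 | hpos
  · simp [h0, p.eq_of_length_eq_zero h0]
  set d : ℕ → Fin (n + 2) := fun i => p.getVert (i + 1) - p.getVert i
  have hd : ∀ i < p.length, d i = 1 ∨ d i = -1 := fun i hi => by
    rcases cycleGraph_adj_iff_eq_add_or_eq_sub.mp (p.adj_getVert_succ hi) with h | h <;>
      simp [d, h]
  have hd_const : ∀ i < p.length, d i = d 0 := by
    intro i hi
    induction i with
    | zero => rfl
    | succ i ih =>
      have hback : d (i + 1) + d i ≠ 0 := fun h => by
        have := hp.getVert_injOn (by simp; omega) (by simp; omega)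
          (sub_eq_zero.mp ((sub_add_sub_cancel _ _ _).symm.trans h))
        omega
      rw [← ih (by omega)]
      rcases hd i (by omega) with h | h <;> rcases hd (i + 1) hi with h' | h' <;>
        rw [h, h'] <;> rw [h, h'] at hback <;> simp at hback
  have hsum : v - u = p.length * d 0 := by
    calc v - u = p.getVert p.length - p.getVert 0 := by simp
      _ = ∑ i ∈ Finset.range p.length, d i := (Finset.sum_range_sub _ _).symm
      _ = ∑ i ∈ Finset.range p.length, d 0 :=
        Finset.sum_congr rfl fun i hi => hd_const i (Finset.mem_range.mp hi)
      _ = p.length * d 0 := by simp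
  rcases hd 0 hpos with h | h <;> rw [h] at hsum
  · exact .inl (by linear_combination hsum)
  · exact .inr (by linear_combination hsum)

end SimpleGraph

namespace IsPeriodicColoring

variable {n t : ℕ}

theorem periodic_cycleGraph {α : Type*} {c : Fin (n + 2) → α}
    (hc : IsPeriodicColoring (cycleGraph (n + 2)) t c) (ht : t ≤ n + 2) :
    Periodic c (t : Fin (n + 2)) := fun v => by
  rcases ht.lt_or_eq with ht | rfl
  · exact (hc v _ (cycleGraph.forwardWalk v t) (cycleGraph.isPath_forwardWalk v ht)
      (cycleGraph.length_forwardWalk v t)).symm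
  · simp

theorem card_le_gcd_cycleGraph {k : ℕ} {c : Fin (n + 2) → Fin k}
    (hc : IsPeriodicColoring (cycleGraph (n + 2)) t c) (hs : Surjective c) (ht : t ≤ n + 2) :
    k ≤ Nat.gcd t (n + 2) := by
  set f : ℤ → Fin k := fun z => c z
  have hft : Periodic f t := fun z => by simpa [f] using hc.periodic_cycleGraph ht z
  have hfN : Periodic f (n + 2 : ℕ) := fun z => by
    simp only [f, Int.cast_add, Int.cast_natCast, Fin.natCast_self, add_zero]
  have hfs : Surjective f := fun y => by
    obtain ⟨v, rfl⟩ := hs y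
    exact ⟨v.val, by simp [f]⟩
  have := (hft.int_gcd hfN).card_le_of_surjective (Int.gcd_pos_of_ne_zero_right _ (by omega)) hfs
  rwa [Fintype.card_fin, Int.gcd_natCast_natCast] at this

end IsPeriodicColoring

theorem IsCircularColoring.dvd_of_cycleGraph {n t : ℕ} {c : Fin (n + 3) → Fin (n + 3) → ZMod t}
    (hc : IsCircularColoring (cycleGraph (n + 3)) t c) : t ∣ n + 3 := by
  have hstep (m : ℕ) : c m (m + 1) = c 0 1 + m := by
    induction m with
    | zero => simp
    | succ m ih =>
      have hne := (Fin.sub_one_ne_add_one ((m : Fin (n + 3)) + 1)).symm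
      rw [add_sub_cancel_right] at hne
      push_cast
      rw [hc.2 _ _ _ (cycleGraph_adj_add_one _) (cycleGraph_adj_add_one _) hne, ih]
      ring
  have hcycle := hstep (n + 3)
  rw [Fin.natCast_self, zero_add, left_eq_add] at hcycle
  exact (ZMod.natCast_eq_zero_iff _ _).mp hcycle

namespace SimpleGraph

variable {n : ℕ}

theorem isPeriodicColoring_cycleGraph_natCast_val {g t : ℕ} [NeZero g] (hgt : g ∣ t)
    (hgN : g ∣ n + 2) :
    IsPeriodicColoring (cycleGraph (n + 2)) t fun v : Fin (n + 2) => (v.val : Fin g) := by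
  have hshift (u : Fin (n + 2)) : ((u + t : Fin (n + 2)).val : Fin g) = (u.val : Fin g) := by
    rw [Fin.ext_iff, Fin.val_natCast, Fin.val_natCast, ← ZMod.natCast_eq_natCast_iff',
      Fin.natCast_val_add hgN, Fin.val_natCast,
      (ZMod.natCast_eq_zero_iff _ g).mpr ((Nat.dvd_mod_iff hgN).mpr hgt), add_zero]
  intro u v p hp hlen
  subst hlen
  beta_reduce
  rcases cycleGraph.eq_add_length_or_eq_sub_length hp with h | h
  · rw [h, hshift]
  · rw [sub_eq_iff_eq_add.mp h.symm, hshift]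

theorem chiT_cycleGraph {t : ℕ} (ht : t ≤ n + 2) :
    chiT (cycleGraph (n + 2)) t = Nat.gcd t (n + 2) := by
  set g := Nat.gcd t (n + 2)
  have hg : 0 < g := Nat.gcd_pos_of_pos_right _ (by omega)
  have : NeZero g := ⟨hg.ne'⟩
  have hsurj : Surjective fun v : Fin (n + 2) => (v.val : Fin g) := fun i => by
    refine ⟨i.val, ?_⟩
    beta_reduce
    rw [Fin.val_cast_of_lt (i.2.trans_le (Nat.gcd_le_right _ (by omega))), Fin.cast_val_eq_self]
  have hmem : g ∈ {k | ∃ c : Fin (n + 2) → Fin k, Surjective c ∧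
      IsPeriodicColoring (cycleGraph (n + 2)) t c} :=
    ⟨_, hsurj, isPeriodicColoring_cycleGraph_natCast_val (Nat.gcd_dvd_left _ _)
      (Nat.gcd_dvd_right _ _)⟩
  refine le_antisymm (csSup_le ⟨g, hmem⟩ fun k ⟨c, hs, hc⟩ => hc.card_le_gcd_cycleGraph hs ht)
    (le_csSup ⟨n + 2, fun k ⟨c, hs, _⟩ => ?_⟩ hmem)
  simpa using Fintype.card_le_of_surjective c hs

theorem circularlyPartite_cycleGraph_of_dvd {t : ℕ} (h : t ∣ n + 3) :
    CircularlyPartite (cycleGraph (n + 3)) t := by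
  have ht : 0 < t := Nat.pos_of_dvd_of_pos h (by omega)
  have : NeZero t := ⟨ht.ne'⟩
  set π : Fin (n + 3) → ZMod t := fun v => v.val
  have hπ (v : Fin (n + 3)) : π (v + 1) = π v + 1 := by
    simp only [π, Fin.natCast_val_add h, Fin.val_one, Nat.cast_one]
  refine ⟨ht, fun v w => if w = v + 1 then π v else -π v, fun j => ?_, fun v w z hvw hwz hzv => ?_⟩
  · refine ⟨j.val, _, cycleGraph_adj_add_one _, ?_⟩
    simp only [if_true, π]
    rw [Fin.val_cast_of_lt ((ZMod.val_lt j).trans_le (Nat.le_of_dvd (by omega) h)),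
      ZMod.natCast_zmod_val]
  rcases cycleGraph_adj_iff_eq_add_or_eq_sub.mp hvw with rfl | rfl <;>
    rcases cycleGraph_adj_iff_eq_add_or_eq_sub.mp hwz with rfl | rfl
  · simp [hπ]
  · simp at hzv
  · simp at hzv
  · simp only [if_neg (Fin.sub_one_ne_add_one _)]
    have hπ' := hπ (v - 1)
    rw [sub_add_cancel] at hπ'
    rw [hπ']
    ring

end SimpleGraph

theorem stmt_17_general (N : ℕ) (hN : 3 ≤ N) (t : ℕ) (htN : t ≤ N) :
    (chiT (cycleGraph N) t = t ↔ CircularlyPartite (cycleGraph N) t) ∧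
    (CircularlyPartite (cycleGraph N) t ↔ t ∣ N) := by
  obtain ⟨n, rfl⟩ : ∃ n, N = n + 3 := ⟨N - 3, by omega⟩
  have hcirc : CircularlyPartite (cycleGraph (n + 3)) t ↔ t ∣ n + 3 :=
    ⟨fun ⟨_, _, hc⟩ => hc.dvd_of_cycleGraph, circularlyPartite_cycleGraph_of_dvd⟩
  have hchi : chiT (cycleGraph (n + 3)) t = Nat.gcd t (n + 3) := chiT_cycleGraph htN
  rw [hchi, hcirc, Nat.gcd_eq_left_iff_dvd]
  exact ⟨Iff.rfl, Iff.rfl⟩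

/-- for the cycle graph on `N` vertices and `t ∈ {1, …, N}`,
`χ_t = t` iff the graph is circularly `t`-partite, iff `t ∣ N`. -/
theorem stmt_17 (N : ℕ) (hN : 3 ≤ N) (t : ℕ) (ht1 : 1 ≤ t) (htN : t ≤ N) :
    (chiT (cycleGraph N) t = t ↔ CircularlyPartite (cycleGraph N) t) ∧
    (CircularlyPartite (cycleGraph N) t ↔ t ∣ N) :=
  stmt_17_general N hN t htN
end
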